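/- arXiv:1310.3363 — 6 statements merged into one kernel-verified Lean document; each statement's English description precedes it below -/
import Mathlib

section
/- Let E be a Polish space, let P(E) denote the space of Borel probability measures on E equipped with the topology of weak convergence, and let P_K be a compact subset of P(E). Then the set function I defined on all subsets A of E by I(A) := sup_{μ ∈ P_K} μ*(A), where μ* is the outer measure of μ, is a Choquet capacity on E: (i) I is monotone (A ⊆ B implies I(A) ≤ I(B)); (ii) I is continuous along increasing sequences (A_n ↑ A implies I(A_n) ↑ I(A)); (iii) I is continuous along decreasing sequences of compact sets (K_n compact with K_n ↓ K implies I(K_n) ↓ I(K)). -/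
/-!
For closed `F`, the map `μ ↦ μ F` is upper semicontinuous on `ProbabilityMeasure E`
(the closed-set half of the portmanteau theorem). The only nontrivial property, continuity along
a decreasing sequence of compact sets `Kₙ`, is then an exchange of `⨆` over the compact set `PK`
with `⨅` over `n` of a decreasing sequence of upper semicontinuous functions: for
`c = ⨅ n, ⨆ μ ∈ PK, μ (Kₙ)` the closed sets `{μ | c ≤ μ (Kₙ)}` meet `PK` in a decreasing family of
nonempty sets (upper semicontinuous functions attain their maximum on compact sets), so by
compactness some `μ ∈ PK` lies in all of them.
-/

open MeasureTheory Set
open scoped ENNReal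

theorem IsCompact.biSup_iInf_eq_iInf_biSup {X ι γ : Type*} [TopologicalSpace X]
    [CompleteLinearOrder γ] [Preorder ι] [IsDirectedOrder ι] [Nonempty ι] {s : Set X}
    (hs : IsCompact s) {f : ι → X → γ} (hf : ∀ i, UpperSemicontinuous (f i))
    (hanti : Antitone f) :
    ⨆ x ∈ s, ⨅ i, f i x = ⨅ i, ⨆ x ∈ s, f i x := by
  refine le_antisymm (iSup₂_le fun x hx => le_iInf fun i => le_iSup₂_of_le x hx (iInf_le _ i)) ?_
  rcases s.eq_empty_or_nonempty with rfl | hne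
  · simp
  set c := ⨅ i, ⨆ x ∈ s, f i x
  have exists_ge : ∀ i, ∃ x ∈ s, c ≤ f i x := fun i => by
    obtain ⟨x, hx, hmax⟩ := ((hf i).upperSemicontinuousOn s).exists_isMaxOn hne hs
    exact ⟨x, hx, (iInf_le _ i).trans (iSup₂_le fun y hy => hmax hy)⟩
  obtain ⟨x, hxs, hx⟩ := hs.inter_iInter_nonempty (fun i => f i ⁻¹' Ici c)
    (fun i => (hf i).isClosed_preimage c) fun u => by
      obtain ⟨j, hj⟩ := u.exists_le
      obtain ⟨x, hx, hcx⟩ := exists_ge j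
      exact ⟨x, hx, mem_iInter₂.2 fun i hi => hcx.trans (hanti (hj i hi) x)⟩
  exact le_iSup₂_of_le x hxs (le_iInf fun i => mem_iInter.1 hx i)

theorem MeasureTheory.ProbabilityMeasure.upperSemicontinuous_apply_of_isClosed {Ω : Type*}
    [MeasurableSpace Ω] [TopologicalSpace Ω] [OpensMeasurableSpace Ω] [HasOuterApproxClosed Ω]
    {F : Set Ω} (hF : IsClosed F) :
    UpperSemicontinuous fun μ : ProbabilityMeasure Ω => (μ : Measure Ω) F :=
  upperSemicontinuous_iff_limsup_le.2 fun _ =>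
    ProbabilityMeasure.limsup_measure_closed_le_of_tendsto Filter.tendsto_id hF

/-- **Supremum of outer measures over a compact set of probability measures is a
Choquet capacity.** Here `(μ : Measure E) A` for an arbitrary set `A` is the outer
measure `μ*(A) = inf { μ B : B Borel, A ⊆ B }`. -/
theorem sup_outer_measure_is_capacity
    {E : Type*} [TopologicalSpace E] [PolishSpace E] [MeasurableSpace E] [BorelSpace E]
    (PK : Set (ProbabilityMeasure E)) (hPK : IsCompact PK)
    (I : Set E → ℝ≥0∞)
    (hI : ∀ A : Set E, I A = ⨆ μ ∈ PK, (μ : Measure E) A) :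
    (∀ A B : Set E, A ⊆ B → I A ≤ I B) ∧
    (∀ A : ℕ → Set E, Monotone A → I (⋃ n, A n) = ⨆ n, I (A n)) ∧
    (∀ K : ℕ → Set E, (∀ n, IsCompact (K n)) → Antitone K →
      I (⋂ n, K n) = ⨅ n, I (K n)) := by
  obtain rfl : I = fun A => ⨆ μ ∈ PK, (μ : Measure E) A := funext hI
  refine ⟨fun A B hAB => iSup₂_mono fun μ _ => measure_mono hAB, fun A hA => ?_,
    fun K hK hKa => ?_⟩
  · simp only [hA.measure_iUnion]
    exact (iSup_congr fun μ => iSup_comm).trans iSup_comm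
  · have hKc : ∀ n, IsClosed (K n) := fun n => (hK n).isClosed
    calc ⨆ μ ∈ PK, (μ : Measure E) (⋂ n, K n) = ⨆ μ ∈ PK, ⨅ n, (μ : Measure E) (K n) :=
          iSup_congr fun μ => iSup_congr fun _ => hKa.measure_iInter
            (fun n => (hKc n).measurableSet.nullMeasurableSet) ⟨0, measure_ne_top _ _⟩
      _ = ⨅ n, ⨆ μ ∈ PK, (μ : Measure E) (K n) :=
          hPK.biSup_iInf_eq_iInf_biSup
            (fun n => ProbabilityMeasure.upperSemicontinuous_apply_of_isClosed (hKc n))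
            fun _ _ hmn μ => measure_mono (hKa hmn)
end

section
/- (Choquet's capacitability theorem.) Let X be a set, J a paving on X, and I a J-capacity. Then every element C of the mosaic generated by J is J-capacitable, i.e. I(C) = sup{ I(K) : K ∈ J_δ, K ⊆ C }, where J_δ is the collection of all countable intersections of elements of J. -/
/-!
Every set of the mosaic is the kernel `⋃ σ, ⋂ n, A n σ` of a Suslin scheme over `J`: such kernels
contain `J` and are closed under countable unions and, interleaving indices with `Nat.pair`, under
countable intersections. Given a kernel `C` with `t < I C`, continuity of `I` along increasing
unions lets one choose bounds `m 0, m 1, …` one at a time so that the part of `C` coming from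
sequences with `σ i ≤ m i` for `i < p` still has capacity `> t`. Each `K n = ⋃ σ ≤ m, A n σ` is
a finite union, hence in `J`; compactness of `{σ | σ ≤ m}` gives `⋂ n, K n ⊆ C`, and continuity
of `I` along decreasing sequences in `J` gives `t ≤ I (⋂ n, K n)`.
-/

open Set Filter Topology PiNat

theorem IsLocallyConstant.exists_cylinder_eq_of_isCompact {E β : Type*} [TopologicalSpace E]
    [DiscreteTopology E] {f : (ℕ → E) → β} (hf : IsLocallyConstant f) {K : Set (ℕ → E)}
    (hK : IsCompact K) : ∃ d, ∀ x ∈ K, ∀ y ∈ cylinder x d, f y = f x := by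
  have hloc : ∀ x, ∃ d, ∀ y ∈ cylinder x d, f y = f x := fun x => by
    obtain ⟨_, ⟨z, d, rfl⟩, hx, hsub⟩ :=
      (isTopologicalBasis_cylinders _).mem_nhds_iff.1 (hf.eventually_eq x)
    exact ⟨d, mem_cylinder_iff_eq.1 hx ▸ hsub⟩
  choose d hd using hloc
  obtain ⟨t, -, hcover⟩ := hK.elim_nhds_subcover (fun x => cylinder x (d x))
    fun x _ => (isOpen_cylinder _ x _).mem_nhds (self_mem_cylinder x _)
  refine ⟨t.sup d, fun x hx y hy => ?_⟩
  obtain ⟨z, hz, hxz⟩ := mem_iUnion₂.1 (hcover hx)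
  have hyz : y ∈ cylinder z (d z) := by
    rw [← mem_cylinder_iff_eq.1 hxz]
    exact cylinder_anti x (Finset.le_sup hz) hy
  rw [hd z y hyz, hd z x hxz]

theorem IsLocallyConstant.finite_image_of_isCompact {Y β : Type*} [TopologicalSpace Y]
    {f : Y → β} (hf : IsLocallyConstant f) {K : Set Y} (hK : IsCompact K) : (f '' K).Finite := by
  have := isCompact_iff_compactSpace.1 hK
  rw [image_eq_range]
  exact (hf.comp_continuous continuous_subtype_val).range_finite

theorem isCompact_Iic_pi {m : ℕ → ℕ} : IsCompact (Iic m) := by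
  rw [← Icc_bot]
  exact isCompact_Icc

theorem exists_forall_of_exists_update {α : Type*} {P : ℕ → (ℕ → α) → Prop}
    (hP : ∀ p m, P p m → ∀ m' ∈ cylinder m p, P p m') {m₀ : ℕ → α} (h₀ : P 0 m₀)
    (hstep : ∀ p m, P p m → ∃ v, P (p + 1) (Function.update m p v)) : ∃ m, ∀ p, P p m := by
  choose v hv using hstep
  let g : ∀ p, {m // P p m} := fun p =>
    Nat.rec ⟨m₀, h₀⟩ (fun p g => ⟨Function.update g.1 p (v p g.1 g.2), hv _ _ _⟩) p
  have hg : ∀ i q, i < q → (g q).1 i = (g (i + 1)).1 i := fun i =>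
    Nat.le_induction rfl fun q hiq ih => by
      rw [← ih]
      exact Function.update_of_ne (Nat.ne_of_lt hiq) _ _
  exact ⟨fun i => (g (i + 1)).1 i, fun p => hP p _ (g p).2 _ fun i hi => (hg i p hi).symm⟩

section SuslinKernels

variable {X : Type*}

/-- `A n σ` stands for the usual `A(σ₀, …, σₙ)` of a Suslin scheme on finite sequences: depending
on a finite prefix of `σ` is replaced by local constancy in `σ ∈ ℕ → ℕ`, whose prefix length may
vary with `σ`. -/
structure IsSuslinScheme (J : Set (Set X)) (A : ℕ → (ℕ → ℕ) → Set X) : Prop where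
  mem : ∀ n σ, A n σ ∈ J
  isLocallyConstant : ∀ n, IsLocallyConstant (A n)
  antitone : ∀ σ, Antitone (A · σ)

def suslinKernel (A : ℕ → (ℕ → ℕ) → Set X) : Set X := ⋃ σ, ⋂ n, A n σ

def suslinSets (J : Set (Set X)) : Set (Set X) :=
  {S | ∃ A, IsSuslinScheme J A ∧ suslinKernel A = S}

structure IsCapacity {β : Type*} [CompleteLattice β] (J : Set (Set X)) (I : Set X → β) :
    Prop where
  mono : Monotone I
  apply_iUnion : ∀ A : ℕ → Set X, Monotone A → I (⋃ n, A n) = ⨆ n, I (A n)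
  apply_iInter : ∀ A : ℕ → Set X, (∀ n, A n ∈ J) → Antitone A → I (⋂ n, A n) = ⨅ n, I (A n)

def boundedKernel (A : ℕ → (ℕ → ℕ) → Set X) (p : ℕ) (m : ℕ → ℕ) : Set X :=
  ⋃ (σ : ℕ → ℕ) (_ : ∀ i < p, σ i ≤ m i), ⋂ n, A n σ

variable {J : Set (Set X)} {A : ℕ → (ℕ → ℕ) → Set X}

theorem subset_suslinSets : J ⊆ suslinSets J := fun B hB =>
  ⟨fun _ _ => B, ⟨fun _ _ => hB, fun _ => IsLocallyConstant.const _, fun _ => antitone_const⟩,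
    by simp only [suslinKernel, iInter_const, iUnion_const]⟩

theorem iUnion_mem_suslinSets {S : ℕ → Set X} (hS : ∀ j, S j ∈ suslinSets J) :
    ⋃ j, S j ∈ suslinSets J := by
  choose A hA hAS using hS
  refine ⟨fun n σ => A (σ 0) n fun i => σ (i + 1),
    ⟨fun n σ => (hA _).mem _ _, fun n => ?_, fun σ => (hA _).antitone _⟩, ?_⟩
  · refine (IsLocallyConstant.iff_eventually_eq _).2 fun σ => ?_
    have h0 : ∀ᶠ τ in 𝓝 σ, τ 0 = σ 0 :=
      (continuous_apply 0).continuousAt ((isOpen_discrete {σ 0}).mem_nhds rfl)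
    have htail := (((hA (σ 0)).isLocallyConstant n).comp_continuous
      (continuous_pi fun i => continuous_apply (i + 1))).eventually_eq σ
    filter_upwards [h0, htail] with τ h0 htail
    rw [h0]
    exact htail
  · ext x
    simp only [← hAS, suslinKernel, mem_iUnion, mem_iInter]
    constructor
    · rintro ⟨σ, hσ⟩
      exact ⟨σ 0, _, hσ⟩
    · rintro ⟨j, τ, hτ⟩
      exact ⟨fun i => Nat.casesOn i j τ, hτ⟩

theorem iInter_mem_suslinSets (hJ : InfClosed J) {S : ℕ → Set X}
    (hS : ∀ j, S j ∈ suslinSets J) : ⋂ j, S j ∈ suslinSets J := by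
  choose A hA hAS using hS
  refine ⟨fun n σ => ⋂ j ∈ Iic n, A j n fun i => σ (Nat.pair j i),
    ⟨fun n σ => hJ.biInf_mem_of_nonempty (finite_Iic n) nonempty_Iic fun j _ => (hA j).mem _ _,
      fun n => ?_, fun σ k n hkn => ?_⟩, ?_⟩
  · refine (IsLocallyConstant.iff_eventually_eq _).2 fun σ => ?_
    have h := (finite_Iic n).eventually_all.2 fun j _ =>
      (((hA j).isLocallyConstant n).comp_continuous
        (continuous_pi fun i => continuous_apply (Nat.pair j i))).eventually_eq σ
    filter_upwards [h] with τ hτ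
    exact iInter₂_congr hτ
  · exact biInter_mono (Iic_subset_Iic.2 hkn) fun j _ => (hA j).antitone _ hkn
  · ext x
    simp only [← hAS, suslinKernel, mem_iUnion, mem_iInter, mem_Iic]
    constructor
    · rintro ⟨σ, hσ⟩ j
      exact ⟨_, fun n => (hA j).antitone _ (le_max_left n j) (hσ _ j (le_max_right n j))⟩
    · intro hx
      choose τ hτ using hx
      refine ⟨fun k => τ k.unpair.1 k.unpair.2, fun n j _ => ?_⟩
      simpa only [Nat.unpair_pair] using hτ j n

theorem boundedKernel_zero (m : ℕ → ℕ) : boundedKernel A 0 m = suslinKernel A := by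
  simp [boundedKernel, suslinKernel]

theorem boundedKernel_congr {p : ℕ} {m m' : ℕ → ℕ} (hm : m' ∈ cylinder m p) :
    boundedKernel A p m' = boundedKernel A p m := by
  have h : ∀ σ : ℕ → ℕ, (∀ i < p, σ i ≤ m' i) ↔ ∀ i < p, σ i ≤ m i :=
    fun σ => forall₂_congr fun i hi => by rw [hm i hi]
  simp only [boundedKernel, h]

theorem monotone_boundedKernel_update (p : ℕ) (m : ℕ → ℕ) :
    Monotone fun v => boundedKernel A (p + 1) (Function.update m p v) :=
  fun _ _ hvw => iUnion₂_mono' fun σ hσ =>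
    ⟨σ, fun i hi => (hσ i hi).trans (Function.update_mono hvw i), subset_rfl⟩

theorem boundedKernel_eq_iUnion_update (p : ℕ) (m : ℕ → ℕ) :
    boundedKernel A p m = ⋃ v, boundedKernel A (p + 1) (Function.update m p v) := by
  ext x
  simp only [boundedKernel, mem_iUnion]
  constructor
  · rintro ⟨σ, hσ, hx⟩
    refine ⟨σ p, σ, fun i hi => ?_, hx⟩
    rcases (Nat.lt_succ_iff.1 hi).lt_or_eq with hi | rfl
    · rw [Function.update_of_ne hi.ne]
      exact hσ i hi
    · rw [Function.update_self]
  · rintro ⟨v, σ, hσ, hx⟩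
    refine ⟨σ, fun i hi => ?_, hx⟩
    simpa only [Function.update_of_ne hi.ne] using hσ i (hi.trans p.lt_succ_self)

theorem IsSuslinScheme.exists_boundedKernel_subset (hA : IsSuslinScheme J A)
    (m : ℕ → ℕ) (n : ℕ) : ∃ p, boundedKernel A p m ⊆ ⋃ σ ∈ Iic m, A n σ := by
  obtain ⟨d, hd⟩ := (hA.isLocallyConstant n).exists_cylinder_eq_of_isCompact isCompact_Iic_pi
  refine ⟨d, iUnion₂_subset fun σ hσ => ?_⟩
  have h : A n σ = A n (σ ⊓ m) :=
    hd _ (mem_Iic.2 inf_le_right) σ fun i hi => (min_eq_left (hσ i hi)).symm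
  exact (iInter_subset _ n).trans (h ▸ subset_biUnion_of_mem (u := A n) (mem_Iic.2 inf_le_right))

theorem IsSuslinScheme.biUnion_Iic_mem (hJ : SupClosed J) (hA : IsSuslinScheme J A)
    (m : ℕ → ℕ) (n : ℕ) : ⋃ σ ∈ Iic m, A n σ ∈ J := by
  rw [← sUnion_image]
  exact hJ.sSup_mem_of_nonempty
    ((hA.isLocallyConstant n).finite_image_of_isCompact isCompact_Iic_pi)
    (nonempty_Iic.image _) (image_subset_iff.2 fun σ _ => hA.mem n σ)

theorem IsSuslinScheme.iInter_biUnion_Iic_subset (hA : IsSuslinScheme J A) (m : ℕ → ℕ) :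
    ⋂ n, ⋃ σ ∈ Iic m, A n σ ⊆ suslinKernel A := by
  intro x hx
  set F : ℕ → Set (ℕ → ℕ) := fun n => Iic m ∩ {σ | x ∈ A n σ}
  have hF_closed : ∀ n, IsClosed (F n) := fun n =>
    isClosed_Iic.inter (isOpen_compl_iff.1 (hA.isLocallyConstant n {s | x ∉ s}))
  have hF_nonempty : ∀ n, (F n).Nonempty := fun n => by
    obtain ⟨σ, hσ, hxσ⟩ := mem_iUnion₂.1 (mem_iInter.1 hx n)
    exact ⟨σ, hσ, hxσ⟩
  obtain ⟨σ, hσ⟩ := IsCompact.nonempty_iInter_of_sequence_nonempty_isCompact_isClosed F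
    (fun n => inter_subset_inter_right _ fun σ h => hA.antitone σ n.le_succ h) hF_nonempty
    (isCompact_Iic_pi.of_isClosed_subset (hF_closed 0) inter_subset_left) hF_closed
  exact mem_iUnion.2 ⟨σ, mem_iInter.2 fun n => (mem_iInter.1 hσ n).2⟩

theorem IsSuslinScheme.exists_le_of_lt_capacity {β : Type*} [CompleteLinearOrder β]
    {I : Set X → β} (hJ : SupClosed J) (hA : IsSuslinScheme J A) (hI : IsCapacity J I) {t : β}
    (ht : t < I (suslinKernel A)) :
    ∃ K : ℕ → Set X, (∀ n, K n ∈ J) ∧ ⋂ n, K n ⊆ suslinKernel A ∧ t ≤ I (⋂ n, K n) := by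
  obtain ⟨m, hm⟩ : ∃ m, ∀ p, t < I (boundedKernel A p m) := by
    refine exists_forall_of_exists_update (fun p m hpm m' hm' => ?_)
      (m₀ := 0) (by rwa [boundedKernel_zero]) fun p m hpm => ?_
    · rwa [boundedKernel_congr hm']
    · rw [boundedKernel_eq_iUnion_update, hI.apply_iUnion _ (monotone_boundedKernel_update p m)]
        at hpm
      exact lt_iSup_iff.1 hpm
  refine ⟨fun n => ⋃ σ ∈ Iic m, A n σ, hA.biUnion_Iic_mem hJ m, hA.iInter_biUnion_Iic_subset m,
    ?_⟩
  rw [hI.apply_iInter _ (hA.biUnion_Iic_mem hJ m)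
    fun k n hkn => biUnion_mono subset_rfl fun σ _ => hA.antitone σ hkn]
  refine le_iInf fun n => ?_
  obtain ⟨p, hp⟩ := hA.exists_boundedKernel_subset m n
  exact (hm p).le.trans (hI.mono hp)

end SuslinKernels

theorem choquet_capacitability_general
    {X : Type*} (J : Set (Set X))
    (h_union : ∀ A ∈ J, ∀ B ∈ J, A ∪ B ∈ J)
    (h_inter : ∀ A ∈ J, ∀ B ∈ J, A ∩ B ∈ J)
    (Jδ : Set (Set X))
    (hJδ : Jδ = {S | ∃ f : ℕ → Set X, (∀ n, f n ∈ J) ∧ S = ⋂ n, f n})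
    (mosaic : Set (Set X))
    (hmosaic : mosaic = ⋂₀ {M : Set (Set X) | J ⊆ M ∧
      (∀ f : ℕ → Set X, (∀ n, f n ∈ M) → (⋃ n, f n) ∈ M) ∧
      (∀ f : ℕ → Set X, (∀ n, f n ∈ M) → (⋂ n, f n) ∈ M)})
    (I : Set X → EReal)
    (h_mono : ∀ A B : Set X, A ⊆ B → I A ≤ I B)
    (h_incr : ∀ A : ℕ → Set X, Monotone A → I (⋃ n, A n) = ⨆ n, I (A n))
    (h_decr : ∀ A : ℕ → Set X, (∀ n, A n ∈ J) → Antitone A → I (⋂ n, A n) = ⨅ n, I (A n)) :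
    ∀ C ∈ mosaic, I C = ⨆ (K : Set X) (_ : K ∈ Jδ ∧ K ⊆ C), I K := by
  have hI : IsCapacity J I := ⟨fun A B h => h_mono A B h, h_incr, h_decr⟩
  intro C hC
  obtain ⟨A, hA, rfl⟩ : C ∈ suslinSets J := by
    rw [hmosaic] at hC
    exact hC _ ⟨subset_suslinSets, fun _ => iUnion_mem_suslinSets,
      fun _ => iInter_mem_suslinSets fun _ hA _ hB => h_inter _ hA _ hB⟩
  refine le_antisymm (le_of_forall_lt_imp_le_of_dense fun t ht => ?_)
    (iSup₂_le fun K hK => h_mono _ _ hK.2)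
  obtain ⟨K, hKJ, hKA, htK⟩ :=
    hA.exists_le_of_lt_capacity (fun _ hA _ hB => h_union _ hA _ hB) hI ht
  exact htK.trans (le_iSup₂_of_le (⋂ n, K n) ⟨hJδ ▸ ⟨K, hKJ, rfl⟩, hKA⟩ le_rfl)

/-- **Choquet's capacitability theorem.** `J` is a paving on `X` (contains `∅`, stable under
finite unions and intersections), `Jδ` is the collection of countable intersections of
elements of `J`, `mosaic` is the smallest collection containing `J` stable under countable
unions and countable intersections, and `I : 2^X → ℝ ∪ {∞}` (modelled as `EReal`-valued,
never `⊥`) is a `J`-capacity.  Then every element of the mosaic is `J`-capacitable. -/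
theorem choquet_capacitability
    {X : Type*} (J : Set (Set X))
    (h_empty : ∅ ∈ J)
    (h_union : ∀ A ∈ J, ∀ B ∈ J, A ∪ B ∈ J)
    (h_inter : ∀ A ∈ J, ∀ B ∈ J, A ∩ B ∈ J)
    (Jδ : Set (Set X))
    (hJδ : Jδ = {S | ∃ f : ℕ → Set X, (∀ n, f n ∈ J) ∧ S = ⋂ n, f n})
    (mosaic : Set (Set X))
    (hmosaic : mosaic = ⋂₀ {M : Set (Set X) | J ⊆ M ∧
      (∀ f : ℕ → Set X, (∀ n, f n ∈ M) → (⋃ n, f n) ∈ M) ∧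
      (∀ f : ℕ → Set X, (∀ n, f n ∈ M) → (⋂ n, f n) ∈ M)})
    (I : Set X → EReal)
    (h_ne_bot : ∀ A : Set X, I A ≠ ⊥)
    (h_mono : ∀ A B : Set X, A ⊆ B → I A ≤ I B)
    (h_incr : ∀ A : ℕ → Set X, Monotone A → I (⋃ n, A n) = ⨆ n, I (A n))
    (h_decr : ∀ A : ℕ → Set X, (∀ n, A n ∈ J) → Antitone A → I (⋂ n, A n) = ⨅ n, I (A n)) :
    ∀ C ∈ mosaic, I C = ⨆ (K : Set X) (_ : K ∈ Jδ ∧ K ⊆ C), I K :=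
  choquet_capacitability_general J h_union h_inter Jδ hJδ mosaic hmosaic I h_mono h_incr h_decr
end

section
/- Let (Ω, F) be a measurable space and E a locally compact Polish space. Let I_p denote the paving on Ω × E consisting of all finite unions of rectangles B × K with B ∈ F and K ⊆ E compact, and let I_δ be the collection of all countable intersections of elements of I_p. Then the projection operator π_Ω is continuously decreasing on I_δ: for every decreasing sequence (L_n) of elements of I_δ, one has ∩_n π_Ω(L_n) = π_Ω(∩_n L_n). Moreover, the class π_Ω(I_δ) := { π_Ω(L) : L ∈ I_δ } is stable under countable intersections, finite unions, and contains the empty set. -/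
/-!
Every set in `I_δ` is the intersection of a decreasing sequence of sets in `I_p`, and all these
sets have compact sections `{x | (ω, x) ∈ L}`. If `ω` lies in every `π_Ω(L_n)`, the sections of
the `L_n` at `ω` form a decreasing sequence of nonempty compact sets, so they have a common
point, and `ω ∈ π_Ω(⋂ L_n)`. Applied to the partial intersections of a sequence in `I_p`, whose
projections are measurable, this shows that `π_Ω(I_δ)` consists of measurable sets; conversely
`B = π_Ω(B × {x₀})`. Hence `π_Ω(I_δ)` is the σ-algebra `F` (or `{∅}` when `E` is empty), which is
stable under finite unions and countable intersections.
-/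

open Set

section CountableInters

variable {α : Type*}

/-- `P_δ`, as `I_δ = (I_p)_δ` in the paper. -/
def countableInters (P : Set (Set α)) : Set (Set α) :=
  {S | ∃ f : ℕ → Set α, (∀ n, f n ∈ P) ∧ S = ⋂ n, f n}

variable {P : Set (Set α)}

theorem mem_countableInters_of_mem {S : Set α} (hS : S ∈ P) : S ∈ countableInters P :=
  ⟨fun _ => S, fun _ => hS, (iInter_const S).symm⟩

theorem exists_antitone_of_mem_countableInters (hP : ∀ s ∈ P, ∀ t ∈ P, s ∩ t ∈ P)
    {S : Set α} (hS : S ∈ countableInters P) :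
    ∃ f : ℕ → Set α, (∀ n, f n ∈ P) ∧ Antitone f ∧ S = ⋂ n, f n := by
  obtain ⟨f, hf, rfl⟩ := hS
  refine ⟨dissipate f, fun n => ?_, antitone_dissipate, iInter_dissipate.symm⟩
  induction n with
  | zero => simpa only [dissipate_zero_nat] using hf 0
  | succ n ih => simpa only [dissipate_succ] using hP _ ih _ (hf (n + 1))

end CountableInters

theorem fst_image_iInter_of_antitone {α E : Type*} [TopologicalSpace E] {L : ℕ → Set (α × E)}
    (hL : Antitone L) (hcompact : ∀ a, IsCompact (Prod.mk a ⁻¹' L 0))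
    (hclosed : ∀ n a, IsClosed (Prod.mk a ⁻¹' L n)) :
    Prod.fst '' ⋂ n, L n = ⋂ n, Prod.fst '' L n := by
  refine (image_iInter_subset L Prod.fst).antisymm fun a ha => ?_
  have hne : ∀ n, (Prod.mk a ⁻¹' L n).Nonempty := fun n => by
    obtain ⟨⟨_, x⟩, hx, rfl⟩ := mem_iInter.1 ha n
    exact ⟨x, hx⟩
  obtain ⟨x, hx⟩ := IsCompact.nonempty_iInter_of_sequence_nonempty_isCompact_isClosed
    (fun n => Prod.mk a ⁻¹' L n) (fun n => preimage_mono (hL n.le_succ)) hne (hcompact a)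
    (hclosed · a)
  exact ⟨(a, x), by simpa only [mem_iInter, mem_preimage] using hx, rfl⟩

section CompactRectUnions

variable {Ω E : Type*} [MeasurableSpace Ω] [TopologicalSpace E]

variable (Ω E) in
/-- The paving `I_p`. -/
def compactRectUnions : Set (Set (Ω × E)) :=
  {S | ∃ (n : ℕ) (B : Fin n → Set Ω) (K : Fin n → Set E),
    (∀ i, MeasurableSet (B i)) ∧ (∀ i, IsCompact (K i)) ∧ S = ⋃ i, B i ×ˢ K i}

theorem prod_mem_compactRectUnions {B : Set Ω} {K : Set E} (hB : MeasurableSet B)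
    (hK : IsCompact K) : B ×ˢ K ∈ compactRectUnions Ω E :=
  ⟨1, fun _ => B, fun _ => K, fun _ => hB, fun _ => hK, (iUnion_const _).symm⟩

theorem inter_mem_compactRectUnions [T2Space E] {S T : Set (Ω × E)}
    (hS : S ∈ compactRectUnions Ω E) (hT : T ∈ compactRectUnions Ω E) :
    S ∩ T ∈ compactRectUnions Ω E := by
  obtain ⟨n, B, K, hB, hK, rfl⟩ := hS
  obtain ⟨m, C, K', hC, hK', rfl⟩ := hT
  let e := (finProdFinEquiv (m := n) (n := m)).symm
  refine ⟨n * m, fun k => B (e k).1 ∩ C (e k).2, fun k => K (e k).1 ∩ K' (e k).2,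
    fun k => (hB _).inter (hC _), fun k => (hK _).inter (hK' _), ?_⟩
  ext p
  simp only [mem_inter_iff, mem_iUnion, mem_prod]
  constructor
  · rintro ⟨⟨i, hBi, hKi⟩, j, hCj, hKj⟩
    refine ⟨e.symm (i, j), ?_⟩
    simp only [Equiv.apply_symm_apply]
    exact ⟨⟨hBi, hCj⟩, hKi, hKj⟩
  · rintro ⟨k, ⟨hBk, hCk⟩, hKk, hK'k⟩
    exact ⟨⟨_, hBk, hKk⟩, _, hCk, hK'k⟩

theorem isCompact_mk_preimage_of_mem_compactRectUnions {S : Set (Ω × E)}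
    (hS : S ∈ compactRectUnions Ω E) (ω : Ω) : IsCompact (Prod.mk ω ⁻¹' S) := by
  classical
  obtain ⟨n, B, K, -, hK, rfl⟩ := hS
  simp only [preimage_iUnion, mk_preimage_prod_right_eq_if]
  exact isCompact_iUnion fun i => by split_ifs; exacts [hK i, isCompact_empty]

theorem measurableSet_fst_image_of_mem_compactRectUnions {S : Set (Ω × E)}
    (hS : S ∈ compactRectUnions Ω E) : MeasurableSet (Prod.fst '' S) := by
  obtain ⟨n, B, K, hB, -, rfl⟩ := hS
  rw [image_iUnion]
  refine .iUnion fun i => ?_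
  rcases (K i).eq_empty_or_nonempty with hKi | hKi
  · simp [hKi]
  · simpa only [fst_image_prod _ hKi] using hB i

variable [T2Space E]

theorem isCompact_mk_preimage_of_mem_countableInters {L : Set (Ω × E)}
    (hL : L ∈ countableInters (compactRectUnions Ω E)) (ω : Ω) :
    IsCompact (Prod.mk ω ⁻¹' L) := by
  obtain ⟨f, hf, rfl⟩ := hL
  rw [preimage_iInter]
  exact (isCompact_mk_preimage_of_mem_compactRectUnions (hf 0) ω).of_isClosed_subset
    (isClosed_iInter fun n => (isCompact_mk_preimage_of_mem_compactRectUnions (hf n) ω).isClosed)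
    (iInter_subset _ 0)

theorem fst_image_iInter_of_mem_countableInters {L : ℕ → Set (Ω × E)}
    (hL : ∀ n, L n ∈ countableInters (compactRectUnions Ω E)) (hanti : Antitone L) :
    Prod.fst '' ⋂ n, L n = ⋂ n, Prod.fst '' L n :=
  fst_image_iInter_of_antitone hanti (isCompact_mk_preimage_of_mem_countableInters (hL 0))
    fun n ω => (isCompact_mk_preimage_of_mem_countableInters (hL n) ω).isClosed

theorem measurableSet_fst_image_of_mem_countableInters {L : Set (Ω × E)}
    (hL : L ∈ countableInters (compactRectUnions Ω E)) : MeasurableSet (Prod.fst '' L) := by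
  obtain ⟨f, hf, hanti, rfl⟩ :=
    exists_antitone_of_mem_countableInters (fun _ hS _ hT => inter_mem_compactRectUnions hS hT) hL
  rw [fst_image_iInter_of_mem_countableInters (fun n => mem_countableInters_of_mem (hf n)) hanti]
  exact .iInter fun n => measurableSet_fst_image_of_mem_compactRectUnions (hf n)

theorem exists_mem_countableInters_fst_image_eq_iff {s : Set Ω} :
    (∃ L ∈ countableInters (compactRectUnions Ω E), s = Prod.fst '' L) ↔
      MeasurableSet s ∧ (s.Nonempty → Nonempty E) := by
  constructor
  · rintro ⟨L, hL, rfl⟩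
    exact ⟨measurableSet_fst_image_of_mem_countableInters hL, fun ⟨_, p, _, _⟩ => ⟨p.2⟩⟩
  · rintro ⟨hs, hE⟩
    rcases s.eq_empty_or_nonempty with rfl | hne
    · refine ⟨∅, mem_countableInters_of_mem ?_, (image_empty _).symm⟩
      simpa only [empty_prod] using prod_mem_compactRectUnions (E := E) .empty isCompact_empty
    · obtain ⟨x⟩ := hE hne
      exact ⟨s ×ˢ {x}, mem_countableInters_of_mem (prod_mem_compactRectUnions hs
        isCompact_singleton), (fst_image_prod s (singleton_nonempty x)).symm⟩

end CompactRectUnions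

theorem projection_decreasing_on_Idelta_general
    {Ω E : Type*} [MeasurableSpace Ω]
    [TopologicalSpace E] [PolishSpace E]
    (Ip : Set (Set (Ω × E)))
    (hIp : Ip = {S | ∃ (n : ℕ) (B : Fin n → Set Ω) (K : Fin n → Set E),
      (∀ i, MeasurableSet (B i)) ∧ (∀ i, IsCompact (K i)) ∧ S = ⋃ i, B i ×ˢ K i})
    (Iδ : Set (Set (Ω × E)))
    (hIδ : Iδ = {S | ∃ f : ℕ → Set (Ω × E), (∀ n, f n ∈ Ip) ∧ S = ⋂ n, f n})
    (PIδ : Set (Set Ω))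
    (hPIδ : PIδ = {s | ∃ L ∈ Iδ, s = Prod.fst '' L}) :
    (∀ L : ℕ → Set (Ω × E), (∀ n, L n ∈ Iδ) → Antitone L →
      (⋂ n, Prod.fst '' L n) = Prod.fst '' (⋂ n, L n)) ∧
    (∅ ∈ PIδ) ∧
    (∀ s ∈ PIδ, ∀ t ∈ PIδ, s ∪ t ∈ PIδ) ∧
    (∀ f : ℕ → Set Ω, (∀ n, f n ∈ PIδ) → (⋂ n, f n) ∈ PIδ) := by
  subst hIp hIδ hPIδ
  have hmem (s : Set Ω) := exists_mem_countableInters_fst_image_eq_iff (E := E) (s := s)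
  refine ⟨fun L hL hanti => (fst_image_iInter_of_mem_countableInters hL hanti).symm,
    (hmem ∅).2 ⟨.empty, fun h => (not_nonempty_empty h).elim⟩, ?_, ?_⟩
  · rintro s hs t ht
    obtain ⟨hs_meas, hsE⟩ := (hmem s).1 hs
    obtain ⟨ht_meas, htE⟩ := (hmem t).1 ht
    exact (hmem _).2 ⟨hs_meas.union ht_meas, fun h => (union_nonempty.1 h).elim hsE htE⟩
  · intro f hf
    exact (hmem _).2 ⟨.iInter fun n => ((hmem _).1 (hf n)).1,
      fun h => ((hmem _).1 (hf 0)).2 (h.mono (iInter_subset f 0))⟩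

/-- **The projection operator is continuously decreasing on `I_δ`, and `π_Ω(I_δ)` is a
`δ`-paving.** Here `Ip` is the paving of finite unions of rectangles `B × K` with `B`
measurable and `K ⊆ E` compact, `Iδ` is the collection of countable intersections of
elements of `Ip`, and `PIδ` is the collection of projections onto `Ω` of elements of `Iδ`. -/
theorem projection_decreasing_on_Idelta
    {Ω E : Type*} [MeasurableSpace Ω]
    [TopologicalSpace E] [PolishSpace E] [LocallyCompactSpace E]
    (Ip : Set (Set (Ω × E)))
    (hIp : Ip = {S | ∃ (n : ℕ) (B : Fin n → Set Ω) (K : Fin n → Set E),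
      (∀ i, MeasurableSet (B i)) ∧ (∀ i, IsCompact (K i)) ∧ S = ⋃ i, B i ×ˢ K i})
    (Iδ : Set (Set (Ω × E)))
    (hIδ : Iδ = {S | ∃ f : ℕ → Set (Ω × E), (∀ n, f n ∈ Ip) ∧ S = ⋂ n, f n})
    (PIδ : Set (Set Ω))
    (hPIδ : PIδ = {s | ∃ L ∈ Iδ, s = Prod.fst '' L}) :
    (∀ L : ℕ → Set (Ω × E), (∀ n, L n ∈ Iδ) → Antitone L →
      (⋂ n, Prod.fst '' L n) = Prod.fst '' (⋂ n, L n)) ∧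
    (∅ ∈ PIδ) ∧
    (∀ s ∈ PIδ, ∀ t ∈ PIδ, s ∪ t ∈ PIδ) ∧
    (∀ f : ℕ → Set Ω, (∀ n, f n ∈ PIδ) → (⋂ n, f n) ∈ PIδ) :=
  projection_decreasing_on_Idelta_general Ip hIp Iδ hIδ PIδ hPIδ
end

section
/- (Measurable projection theorem.) Let (Ω, F, P) be a probability space and E a locally compact Polish space. For every A in the product σ-field F ⊗ B(E), the projection π_Ω(A) differs from an F-measurable set by a P-negligible set: there exists G ∈ F with G ⊆ π_Ω(A) and P*(π_Ω(A)) = P(G). In particular, if F is P-complete, then π_Ω(A) ∈ F. -/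
/-!
A product-measurable set involves only countably many measurable subsets of `Ω`, so it is the
preimage of a measurable `B ⊆ (ℕ → Bool) × E` under `(ω, x) ↦ (g ω, x)` for a measurable
`g : Ω → ℕ → Bool`. Its projection is then `g ⁻¹' (Prod.fst '' B)`, the preimage of an analytic
subset of a Polish space, so it suffices that analytic sets are null measurable for finite
measures. This is Choquet's capacitability argument: for `S = f '' (ℕ → ℕ)` and `t < μ S`,
continuity from below of the outer measure lets us bound the coordinates one at a time while
keeping `t < μ (f '' {x | ∀ i < k, x i ≤ n i})`; the closures of these images decrease to a subset
of the compact set `f '' ∏ Iic (n i)`, whose measure is therefore at least `t`.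
-/

open MeasureTheory Set Filter Topology

theorem MeasurableSet.exists_eq_prodMap_preimage_nat_bool {Ω E : Type*} [MeasurableSpace Ω]
    [MeasurableSpace E] {A : Set (Ω × E)} (hA : MeasurableSet A) :
    ∃ (g : Ω → ℕ → Bool) (B : Set ((ℕ → Bool) × E)), Measurable g ∧ MeasurableSet B ∧
      A = Prod.map g id ⁻¹' B := by
  classical
  rw [← generateFrom_prod] at hA
  induction A, hA using MeasurableSpace.generateFrom_induction with
  | hC _ hA =>
    obtain ⟨s, hs : MeasurableSet s, t, ht : MeasurableSet t, rfl⟩ := hA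
    refine ⟨fun ω _ => decide (ω ∈ s), ((fun c : ℕ → Bool => c 0) ⁻¹' {true}) ×ˢ t,
      measurable_pi_lambda _ fun _ => measurable_to_bool (by convert hs; ext; simp),
      ((measurableSet_singleton true).preimage (measurable_pi_apply 0)).prod ht, ?_⟩
    ext
    simp
  | empty => exact ⟨fun _ _ => true, ∅, measurable_const, .empty, rfl⟩
  | compl _ _ h =>
    obtain ⟨g, B, hg, hB, rfl⟩ := h
    exact ⟨g, Bᶜ, hg, hB.compl, rfl⟩
  | iUnion _ _ h =>
    choose g B hg hB hgB using h
    -- `g n ω m` is stored in coordinate `Nat.pair n m`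
    refine ⟨fun ω k => g k.unpair.1 ω k.unpair.2,
      ⋃ n, (fun p => (fun m => p.1 (Nat.pair n m), p.2)) ⁻¹' B n,
      measurable_pi_lambda _ fun k => measurable_pi_apply _ |>.comp (hg _),
      .iUnion fun n => hB n |>.preimage <|
        (measurable_pi_lambda _ fun m => (measurable_pi_apply _).comp measurable_fst).prodMk
          measurable_snd, ?_⟩
    simp_rw [hgB, preimage_iUnion]
    ext
    simp [Prod.map]

theorem Set.image_fst_preimage_prodMap_id {α β γ : Type*} (g : α → β) (B : Set (β × γ)) :
    Prod.fst '' (Prod.map g id ⁻¹' B) = g ⁻¹' (Prod.fst '' B) := by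
  ext
  simp

namespace MeasureTheory

def prefixBox (n : ℕ → ℕ) (k : ℕ) : Set (ℕ → ℕ) := {x | ∀ i < k, x i ≤ n i}

theorem antitone_prefixBox (n : ℕ → ℕ) : Antitone (prefixBox n) :=
  fun _ _ hkl _ hx i hi => hx i (hi.trans_le hkl)

theorem exists_forall_lt_measure_image_prefixBox {X : Type*} [MeasurableSpace X] (μ : Measure X)
    (f : (ℕ → ℕ) → X) {t : ENNReal} (ht : t < μ (range f)) :
    ∃ n, ∀ k, t < μ (f '' prefixBox n k) := by
  have step : ∀ (S : Set (ℕ → ℕ)) (k : ℕ), t < μ (f '' S) →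
      ∃ m, t < μ (f '' (S ∩ {x | x k ≤ m})) := by
    intro S k hS
    have hmono : Monotone fun m => f '' (S ∩ {x | x k ≤ m}) :=
      fun m m' hm => image_mono (inter_subset_inter_right _ fun x hx => le_trans hx hm)
    have hcover : S = ⋃ m, S ∩ {x | x k ≤ m} := by
      ext x
      simpa using fun _ => ⟨x k, le_rfl⟩
    rwa [hcover, image_iUnion, hmono.measure_iUnion, lt_iSup_iff] at hS
  choose! m hm using step
  let T : ℕ → Set (ℕ → ℕ) := fun k => Nat.rec univ (fun k S => S ∩ {x | x k ≤ m S k}) k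
  have hT : ∀ k, T k = prefixBox (fun i => m (T i) i) k := by
    intro k
    induction k with
    | zero => simp [T, prefixBox]
    | succ k ih =>
      change T k ∩ {x | x k ≤ m (T k) k} = _
      ext x
      rw [mem_inter_iff, prefixBox, mem_ofPred_eq, mem_ofPred_eq, Nat.forall_lt_succ_right]
      exact and_congr_left' (Set.ext_iff.1 ih x)
  refine ⟨fun i => m (T i) i, fun k => ?_⟩
  rw [← hT]
  induction k with
  | zero => simpa [T] using ht
  | succ k ih => exact hm _ _ ih

theorem iInter_closure_image_prefixBox_subset {X : Type*} [TopologicalSpace X] [T2Space X]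
    {f : (ℕ → ℕ) → X} (hf : Continuous f) (n : ℕ → ℕ) :
    ⋂ k, closure (f '' prefixBox n k) ⊆ f '' univ.pi fun i => Iic (n i) := by
  intro y hy
  have hB : (⨅ k, 𝓟 (prefixBox n k)).HasBasis (fun _ => True) (prefixBox n) :=
    hasBasis_iInf_principal (antitone_prefixBox n).directed_ge
  have : (comap f (𝓝 y) ⊓ ⨅ k, 𝓟 (prefixBox n k)).NeBot := by
    refine inf_neBot_iff.2 fun s hs s' hs' => ?_
    obtain ⟨V, hV, hVs⟩ := mem_comap.1 hs
    obtain ⟨k, -, hk⟩ := hB.mem_iff.1 hs'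
    obtain ⟨-, hv, x, hx, rfl⟩ := mem_closure_iff_nhds.1 (mem_iInter.1 hy k) V hV
    exact ⟨x, hVs hv, hk hx⟩
  set U := Ultrafilter.of (comap f (𝓝 y) ⊓ ⨅ k, 𝓟 (prefixBox n k))
  have hU : (U : Filter (ℕ → ℕ)) ≤ comap f (𝓝 y) ⊓ ⨅ k, 𝓟 (prefixBox n k) := Ultrafilter.of_le _
  have hUbox : ∀ k, prefixBox n k ∈ U := fun k => hU.trans inf_le_right (hB.mem_of_mem trivial)
  -- Tychonoff's argument: each coordinate of `U` is an ultrafilter on a finite set.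
  have hcoord : ∀ i, ∃ a ∈ Iic (n i), ↑(U.map (Function.eval i)) ≤ 𝓝 a := fun i =>
    (finite_Iic (n i)).isCompact.ultrafilter_le_nhds _ <|
      le_principal_iff.2 <| Ultrafilter.mem_map.2 <| mem_of_superset (hUbox (i + 1))
        fun _ hx => hx i i.lt_succ_self
  choose a ha hUa using hcoord
  refine ⟨a, fun i _ => ha i, tendsto_nhds_unique ((hf.tendsto a).comp (tendsto_pi_nhds.2 hUa)) ?_⟩
  exact tendsto_iff_comap.2 (hU.trans inf_le_left)

theorem AnalyticSet.exists_isCompact_subset_le_measure {X : Type*} [TopologicalSpace X]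
    [T2Space X] [MeasurableSpace X] [OpensMeasurableSpace X] (μ : Measure X) [IsFiniteMeasure μ]
    {S : Set X} (hS : AnalyticSet S) {t : ENNReal} (ht : t < μ S) :
    ∃ K ⊆ S, IsCompact K ∧ t ≤ μ K := by
  rw [AnalyticSet] at hS
  obtain rfl | ⟨f, hf, rfl⟩ := hS
  · simp at ht
  obtain ⟨n, hn⟩ := exists_forall_lt_measure_image_prefixBox μ f ht
  refine ⟨_, image_subset_range f _,
    (isCompact_univ_pi fun i => (finite_Iic (n i)).isCompact).image hf, ?_⟩
  have hanti : Antitone fun k => closure (f '' prefixBox n k) :=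
    fun _ _ hkl => closure_mono <| image_mono <| antitone_prefixBox n hkl
  calc t ≤ ⨅ k, μ (closure (f '' prefixBox n k)) :=
        le_iInf fun k => (hn k).le.trans (measure_mono subset_closure)
    _ = μ (⋂ k, closure (f '' prefixBox n k)) :=
        (hanti.measure_iInter (fun _ => measurableSet_closure.nullMeasurableSet)
          ⟨0, measure_ne_top _ _⟩).symm
    _ ≤ _ := measure_mono (iInter_closure_image_prefixBox_subset hf n)

theorem NullMeasurableSet.of_forall_lt_exists_subset {α : Type*} [MeasurableSpace α]
    {μ : Measure α} [IsFiniteMeasure μ] {S : Set α}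
    (h : ∀ t < μ S, ∃ G ⊆ S, MeasurableSet G ∧ t ≤ μ G) : NullMeasurableSet S μ := by
  rcases eq_zero_or_pos (μ S) with h0 | hpos
  · exact NullMeasurableSet.of_null h0
  obtain ⟨u, -, hu, hlim⟩ := exists_seq_strictMono_tendsto' hpos
  choose G hGS hG hGu using fun k => h (u k) (hu k).2
  have hGm : MeasurableSet (⋃ k, G k) := .iUnion hG
  have hle : μ S ≤ μ (⋃ k, G k) :=
    le_of_tendsto' hlim fun k => (hGu k).trans (measure_mono (subset_iUnion G k))
  exact hGm.nullMeasurableSet.congr <|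
    ae_eq_of_subset_of_measure_ge (iUnion_subset hGS) hle hGm.nullMeasurableSet (measure_ne_top μ _)

theorem AnalyticSet.nullMeasurableSet {X : Type*} [TopologicalSpace X] [T2Space X]
    [MeasurableSpace X] [OpensMeasurableSpace X] (μ : Measure X) [IsFiniteMeasure μ]
    {S : Set X} (hS : AnalyticSet S) : NullMeasurableSet S μ :=
  .of_forall_lt_exists_subset fun _ ht =>
    let ⟨K, hKS, hK, htK⟩ := hS.exists_isCompact_subset_le_measure μ ht
    ⟨K, hKS, hK.isClosed.measurableSet, htK⟩

end MeasureTheory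

theorem measurable_projection_general
    {Ω E : Type*} [MeasurableSpace Ω]
    [TopologicalSpace E] [PolishSpace E]
    [MeasurableSpace E] [BorelSpace E]
    (P : Measure Ω) [IsProbabilityMeasure P]
    (A : Set (Ω × E)) (hA : MeasurableSet A) :
    (∃ G : Set Ω, MeasurableSet G ∧ G ⊆ Prod.fst '' A ∧ P (Prod.fst '' A) = P G) ∧
    (P.IsComplete → MeasurableSet (Prod.fst '' A)) := by
  obtain ⟨g, B, hg, hB, rfl⟩ := hA.exists_eq_prodMap_preimage_nat_bool
  have hS : NullMeasurableSet (Prod.fst '' (Prod.map g id ⁻¹' B)) P := by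
    rw [image_fst_preimage_prodMap_id]
    exact ((hB.analyticSet_image measurable_fst).nullMeasurableSet (P.map g)).preimage
      (hg.measurePreserving P).quasiMeasurePreserving
  obtain ⟨G, hGS, hG, hGae⟩ := hS.exists_measurable_subset_ae_eq
  exact ⟨⟨G, hG, hGS, measure_congr hGae.symm⟩, fun _ => hS.measurable_of_complete⟩

/-- **Measurable projection theorem.** For a probability space `(Ω, F, P)` and a locally
compact Polish space `E`, the projection of a product-measurable set differs from a
measurable set by a `P`-negligible set: there is `G ∈ F` with `G ⊆ π_Ω(A)` and
`P*(π_Ω(A)) = P(G)` (here `P` of an arbitrary set is the outer measure `P*`).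
In particular `π_Ω(A) ∈ F` whenever `F` is `P`-complete. -/
theorem measurable_projection
    {Ω E : Type*} [MeasurableSpace Ω]
    [TopologicalSpace E] [PolishSpace E] [LocallyCompactSpace E]
    [MeasurableSpace E] [BorelSpace E]
    (P : Measure Ω) [IsProbabilityMeasure P]
    (A : Set (Ω × E)) (hA : MeasurableSet A) :
    (∃ G : Set Ω, MeasurableSet G ∧ G ⊆ Prod.fst '' A ∧ P (Prod.fst '' A) = P G) ∧
    (P.IsComplete → MeasurableSet (Prod.fst '' A)) :=
  measurable_projection_general P A hA
end

section
/- Let (Ω, F) be a measurable space and A ∈ F ⊗ B(ℝ+). Then: (i) the projection π_Ω(A) belongs to the universal completion F^U of F; (ii) there exists an F^U-measurable map T : Ω → [0, ∞] such that { ω : T(ω) < ∞ } = π_Ω(A) and (ω, T(ω)) ∈ A whenever T(ω) < ∞; (iii) for every F ⊗ B(ℝ+)-measurable function f : Ω × ℝ+ → ℝ, the function g(ω) := sup{ f(ω, t) : (ω, t) ∈ A } (sup ∅ = −∞) is F^U-measurable as a map into ℝ ∪ {−∞, +∞}. -/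
open MeasureTheory
open scoped ENNReal NNReal

/-- The universal completion `F^U = ∩_P F^P` of a σ-field: a set is measurable iff it is
null-measurable (i.e. belongs to the `P`-completion) for every probability measure `P`. -/
def univCompletion {Ω : Type*} (m : MeasurableSpace Ω) : MeasurableSpace Ω :=
  letI : MeasurableSpace Ω := m
  { MeasurableSet' := fun s =>
      ∀ μ : Measure Ω, IsProbabilityMeasure μ → NullMeasurableSet s μ
    measurableSet_empty := fun _ _ => MeasurableSet.empty.nullMeasurableSet
    measurableSet_compl := fun _ hs μ hμ => (hs μ hμ).compl
    measurableSet_iUnion := fun _ hf μ hμ =>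
      NullMeasurableSet.iUnion fun i => hf i μ hμ }

/-!
A set of `F ⊗ B(ℝ≥0)` already lies in `G ⊗ B(ℝ≥0)` for a countably generated `G ≤ F`, so it is
the preimage of a Borel set `A' ⊆ (ℕ → Bool) × ℝ≥0` under `φ × id` for a measurable
`φ : Ω → ℕ → Bool`, and everything is pulled back from the Polish space `ℕ → Bool`, where `A'`
is analytic.

An analytic set `S = h(ℕ^ℕ)`, `h` continuous, is universally measurable: for `c < μ S`, bounding
the coordinates one at a time keeps the measure of the image above `c`, and in the limit yields
a compact subset `h(∏ [0, bᵢ])` of measure at least `c`. A section of `A' = h(ℕ^ℕ)` is read off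
the leftmost branch of the tree of prefixes `u` with `x ∈ π(h(cylinder u))`; each digit of the
branch is decided by countably many of these universally measurable sets.

Finally, `{g > a}` is the projection of `A ∩ {f > a}`, so (iii) follows from (i).
-/

open Set Filter Topology

theorem Measurable.univCompletion {Ω X : Type*} {mΩ : MeasurableSpace Ω} {mX : MeasurableSpace X}
    {φ : Ω → X} (hφ : Measurable φ) :
    Measurable[univCompletion mΩ, univCompletion mX] φ := fun _ hS μ _ =>
  (hS (μ.map φ) (Measure.isProbabilityMeasure_map hφ.aemeasurable)).preimage
    (hφ.quasiMeasurePreserving μ)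

theorem nullMeasurableSet_of_forall_lt_exists_subset {α : Type*} [MeasurableSpace α]
    {μ : Measure α} [IsFiniteMeasure μ] {S : Set α}
    (h : ∀ c < μ S, ∃ K ⊆ S, MeasurableSet K ∧ c ≤ μ K) : NullMeasurableSet S μ := by
  rcases eq_zero_or_pos (μ S) with h0 | hpos
  · exact NullMeasurableSet.of_null h0
  obtain ⟨c, -, hc, hlim⟩ := exists_seq_strictMono_tendsto' hpos
  choose K hKS hKm hcK using fun n => h (c n) (hc n).2
  have hK : MeasurableSet (⋃ n, K n) := .iUnion hKm
  have hle : μ S ≤ μ (⋃ n, K n) :=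
    le_of_tendsto' hlim fun n => (hcK n).trans (measure_mono (subset_iUnion K n))
  exact hK.nullMeasurableSet.congr (ae_eq_of_subset_of_measure_ge (iUnion_subset hKS) hle
    hK.nullMeasurableSet (measure_ne_top μ S))

theorem isCompact_setOf_forall_le (b : ℕ → ℕ) : IsCompact {y : ℕ → ℕ | ∀ i, y i ≤ b i} := by
  simpa only [Set.pi, mem_univ, mem_Iic, forall_const] using
    isCompact_univ_pi fun i => (finite_Iic (b i)).isCompact

theorem exists_subseq_tendsto_of_forall_lt_le {b : ℕ → ℕ} {y : ℕ → ℕ → ℕ}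
    (hy : ∀ n, ∀ i < n, y n i ≤ b i) :
    ∃ z, (∀ i, z i ≤ b i) ∧ ∃ φ : ℕ → ℕ, StrictMono φ ∧ Tendsto (y ∘ φ) atTop (𝓝 z) := by
  -- coordinate `i` of `y n` is at most `b i` for `n > i`, and one of finitely many values otherwise
  let c i := max (b i) ((Finset.range (i + 1)).sup fun n => y n i)
  have hyc : ∀ n i, y n i ≤ c i := fun n i => by
    rcases lt_or_ge i n with hin | hni
    · exact le_max_of_le_left (hy n i hin)
    · exact le_max_of_le_right
        (Finset.le_sup (f := fun m => y m i) (Finset.mem_range.2 (Nat.lt_succ_of_le hni)))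
  obtain ⟨z, -, φ, hφ, hlim⟩ := (isCompact_setOf_forall_le c).tendsto_subseq (hyc ·)
  refine ⟨z, fun i => ?_, φ, hφ, hlim⟩
  refine isClosed_Iic.mem_of_tendsto ((continuous_apply i).continuousAt.tendsto.comp hlim) ?_
  filter_upwards [eventually_gt_atTop i] with j hj
  exact hy _ _ (hj.trans_le hφ.le_apply)

theorem mem_image_of_forall_mem_closure_image {X : Type*} [TopologicalSpace X]
    [FirstCountableTopology X] [T2Space X] {h : (ℕ → ℕ) → X} (hh : Continuous h) {b : ℕ → ℕ}
    {x : X} (hx : ∀ n, x ∈ closure (h '' {y | ∀ i < n, y i ≤ b i})) :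
    x ∈ h '' {y | ∀ i, y i ≤ b i} := by
  obtain ⟨U, hU⟩ := (𝓝 x).exists_antitone_basis
  have hyU : ∀ n, ∃ y, (∀ i < n, y i ≤ b i) ∧ h y ∈ U n := fun n => by
    obtain ⟨_, hxU, y, hy, rfl⟩ := mem_closure_iff_nhds.1 (hx n) (U n) (hU.mem n)
    exact ⟨y, hy, hxU⟩
  choose y hyb hyU using hyU
  obtain ⟨z, hzb, φ, hφ, hlim⟩ := exists_subseq_tendsto_of_forall_lt_le hyb
  exact ⟨z, hzb, tendsto_nhds_unique ((hh.tendsto z).comp hlim)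
    ((hU.tendsto hyU).comp hφ.tendsto_atTop)⟩

theorem exists_lt_measure_image_inter_setOf_le {X : Type*} [MeasurableSpace X] (μ : Measure X)
    (h : (ℕ → ℕ) → X) {S : Set (ℕ → ℕ)} {c : ℝ≥0∞} (hc : c < μ (h '' S)) (n : ℕ) :
    ∃ k, c < μ (h '' (S ∩ {y | y n ≤ k})) := by
  have hmono : Monotone fun k => h '' (S ∩ {y | y n ≤ k}) := fun k l hkl =>
    image_mono (inter_subset_inter_right _ fun y (hy : y n ≤ k) => hy.trans hkl)
  have hunion : ⋃ k, h '' (S ∩ {y | y n ≤ k}) = h '' S := by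
    rw [← image_iUnion, ← inter_iUnion, iUnion_eq_univ_iff.2 fun y => ⟨y n, le_refl (y n)⟩,
      inter_univ]
  rwa [← hunion, hmono.measure_iUnion, lt_iSup_iff] at hc

section Capacity

variable {X : Type*} [TopologicalSpace X] [FirstCountableTopology X] [T2Space X]
  [MeasurableSpace X] [OpensMeasurableSpace X]

theorem exists_isCompact_subset_range_le_measure (μ : Measure X) [IsFiniteMeasure μ]
    {h : (ℕ → ℕ) → X} (hh : Continuous h) {c : ℝ≥0∞} (hc : c < μ (range h)) :
    ∃ K ⊆ range h, IsCompact K ∧ c ≤ μ K := by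
  have hstep : ∀ (S : Set (ℕ → ℕ)) (n : ℕ), ∃ k,
      c < μ (h '' S) → c < μ (h '' (S ∩ {y | y n ≤ k})) := fun S n => by
    by_cases hS : c < μ (h '' S)
    · obtain ⟨k, hk⟩ := exists_lt_measure_image_inter_setOf_le μ h hS n
      exact ⟨k, fun _ => hk⟩
    · exact ⟨0, fun hS' => absurd hS' hS⟩
  choose k hk using hstep
  let F : ℕ → Set (ℕ → ℕ) := fun n => Nat.rec univ (fun n F => F ∩ {y | y n ≤ k F n}) n
  let b n := k (F n) n
  have hF : ∀ n, F n = {y | ∀ i < n, y i ≤ b i} := fun n => by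
    induction n with
    | zero => simp [F]
    | succ n ih =>
      change F n ∩ {y | y n ≤ b n} = _
      ext y
      simp only [ih, mem_inter_iff, mem_ofPred_eq, Nat.lt_succ_iff_lt_or_eq, or_imp, forall_and,
        forall_eq]
  have hcF : ∀ n, c < μ (h '' F n) := fun n => by
    induction n with
    | zero => simpa [F] using hc
    | succ n ih => exact hk (F n) n ih
  have hanti : Antitone fun n => closure (h '' F n) :=
    antitone_nat_of_succ_le fun n => closure_mono (image_mono inter_subset_left)
  refine ⟨h '' {y | ∀ i, y i ≤ b i}, image_subset_range _ _,
    (isCompact_setOf_forall_le b).image hh, ?_⟩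
  calc c ≤ ⨅ n, μ (closure (h '' F n)) :=
        le_iInf fun n => (hcF n).le.trans (measure_mono subset_closure)
    _ = μ (⋂ n, closure (h '' F n)) :=
        (hanti.measure_iInter (fun _ => isClosed_closure.measurableSet.nullMeasurableSet)
          ⟨0, measure_ne_top _ _⟩).symm
    _ ≤ μ (h '' {y | ∀ i, y i ≤ b i}) := measure_mono fun x hx =>
        mem_image_of_forall_mem_closure_image hh fun n => hF n ▸ mem_iInter.1 hx n

theorem MeasureTheory.AnalyticSet.nullMeasurableSet_s9 {S : Set X} (hS : AnalyticSet S)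
    (μ : Measure X) [IsFiniteMeasure μ] : NullMeasurableSet S μ := by
  rw [AnalyticSet] at hS
  rcases hS with rfl | ⟨h, hh, rfl⟩
  · exact nullMeasurableSet_empty
  refine nullMeasurableSet_of_forall_lt_exists_subset fun c hc => ?_
  obtain ⟨K, hKS, hK, hcK⟩ := exists_isCompact_subset_range_le_measure μ hh hc
  exact ⟨K, hKS, hK.isClosed.measurableSet, hcK⟩

theorem MeasureTheory.AnalyticSet.measurableSet_univCompletion {S : Set X}
    (hS : AnalyticSet S) : MeasurableSet[univCompletion ‹_›] S :=
  fun μ _ => hS.nullMeasurableSet_s9 μ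

end Capacity

theorem tendsto_of_forall_res_eq {α : Type*} [TopologicalSpace α] {y : ℕ → ℕ → α} {z : ℕ → α}
    (h : ∀ n, PiNat.res (y n) n = PiNat.res z n) : Tendsto y atTop (𝓝 z) :=
  tendsto_pi_nhds.2 fun i => tendsto_const_nhds.congr' <| by
    filter_upwards [eventually_gt_atTop i] with n hn using (PiNat.res_eq_res.1 (h n) hn).symm

theorem measurable_sInf_setOf_mem {α : Type*} [MeasurableSpace α] {E : ℕ → Set α}
    (hE : ∀ k, MeasurableSet (E k)) : Measurable fun x => sInf {k | x ∈ E k} := by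
  refine measurable_of_Iic fun k => ?_
  have : (fun x => sInf {k | x ∈ E k}) ⁻¹' Iic k = (⋃ j ≤ k, E j) ∪ ⋂ j, (E j)ᶜ := by
    ext x
    simp only [mem_preimage, mem_Iic, mem_union, mem_iUnion, exists_prop, mem_iInter,
      mem_compl_iff]
    constructor
    · intro hx
      by_cases hne : {k | x ∈ E k}.Nonempty
      · exact Or.inl ⟨_, hx, Nat.sInf_mem hne⟩
      · exact Or.inr fun j hj => hne ⟨j, hj⟩
    · rintro (⟨j, hjk, hj⟩ | hx)
      · exact (Nat.sInf_le hj).trans hjk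
      · simp [hx]
  rw [this]
  exact .union (.biUnion (to_countable _) fun j _ => hE j) (.iInter fun j => (hE j).compl)

theorem isOpen_setOf_res_eq {α : Type*} [TopologicalSpace α] [DiscreteTopology α] (u : List α) :
    IsOpen {y : ℕ → α | PiNat.res y u.length = u} := by
  induction u with
  | nil => simp
  | cons k u ih =>
    simp only [List.length_cons, PiNat.res_succ, List.cons.injEq, ofPred_and]
    exact ((isOpen_discrete {k}).preimage (continuous_apply _)).inter ih

section LeftmostBranch

variable {X : Type*} (g : (ℕ → ℕ) → X)

/-- Lists are reversed prefixes, as in `PiNat.res`. -/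
def imageCylinder (u : List ℕ) : Set X := g '' {y | PiNat.res y u.length = u}

noncomputable def leftmostPrefix (x : X) : ℕ → List ℕ
  | 0 => []
  | n + 1 => sInf {k | x ∈ imageCylinder g (k :: leftmostPrefix x n)} :: leftmostPrefix x n

noncomputable def leftmostBranch (x : X) (n : ℕ) : ℕ :=
  sInf {k | x ∈ imageCylinder g (k :: leftmostPrefix g x n)}

theorem leftmostPrefix_succ (x : X) (n : ℕ) :
    leftmostPrefix g x (n + 1) = leftmostBranch g x n :: leftmostPrefix g x n := rfl

theorem res_leftmostBranch (x : X) (n : ℕ) :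
    PiNat.res (leftmostBranch g x) n = leftmostPrefix g x n := by
  induction n with
  | zero => rfl
  | succ n ih => rw [PiNat.res_succ, ih, leftmostPrefix_succ]

theorem exists_mem_imageCylinder_cons {x : X} {u : List ℕ} (hx : x ∈ imageCylinder g u) :
    ∃ k, x ∈ imageCylinder g (k :: u) := by
  obtain ⟨y, hy, rfl⟩ := hx
  exact ⟨y u.length, y, congrArg (y u.length :: ·) hy, rfl⟩

theorem mem_imageCylinder_leftmostPrefix {x : X} (hx : x ∈ range g) (n : ℕ) :
    x ∈ imageCylinder g (leftmostPrefix g x n) := by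
  induction n with
  | zero =>
    obtain ⟨y, rfl⟩ := hx
    exact ⟨y, rfl, rfl⟩
  | succ n ih => exact Nat.sInf_mem (exists_mem_imageCylinder_cons g ih)

theorem apply_leftmostBranch [TopologicalSpace X] [T2Space X] (hg : Continuous g) {x : X}
    (hx : x ∈ range g) : g (leftmostBranch g x) = x := by
  choose y hy hgy using mem_imageCylinder_leftmostPrefix g hx
  have hlim : Tendsto y atTop (𝓝 (leftmostBranch g x)) := by
    refine tendsto_of_forall_res_eq fun n => ?_
    simpa only [← res_leftmostBranch, PiNat.res_length, mem_ofPred_eq] using hy n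
  exact tendsto_nhds_unique ((hg.tendsto _).comp hlim) (by simp [Function.comp_def, hgy])

variable {m : MeasurableSpace X} {g} (hE : ∀ u, MeasurableSet (imageCylinder g u))
include hE

theorem measurableSet_leftmostPrefix_eq (n : ℕ) (u : List ℕ) :
    MeasurableSet {x | leftmostPrefix g x n = u} := by
  induction n generalizing u with
  | zero => exact .const ([] = u)
  | succ n ih =>
    cases u with
    | nil => simp [leftmostPrefix_succ]
    | cons k u =>
      have hset : {x | leftmostPrefix g x (n + 1) = k :: u} =
          {x | leftmostPrefix g x n = u} ∩ {x | sInf {j | x ∈ imageCylinder g (j :: u)} = k} := by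
        ext x
        simp only [leftmostPrefix_succ, leftmostBranch, List.cons.injEq, mem_inter_iff,
          mem_ofPred_eq]
        constructor
        · rintro ⟨h, rfl⟩
          exact ⟨rfl, h⟩
        · rintro ⟨rfl, h⟩
          exact ⟨h, rfl⟩
      rw [hset]
      exact (ih u).inter
        ((measurable_sInf_setOf_mem fun j => hE (j :: u)) (measurableSet_singleton k))

theorem measurable_leftmostBranch : Measurable (leftmostBranch g) := by
  refine measurable_pi_lambda _ fun n => measurable_to_countable' fun k => ?_
  have : (leftmostBranch g · n) ⁻¹' {k} = ⋃ u, {x | leftmostPrefix g x (n + 1) = k :: u} := by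
    ext x
    simp [leftmostPrefix_succ]
  rw [this]
  exact .iUnion fun u => measurableSet_leftmostPrefix_eq hE (n + 1) (k :: u)

end LeftmostBranch

theorem MeasureTheory.AnalyticSet.exists_measurable_univCompletion_section
    {X Y : Type*} [TopologicalSpace X] [FirstCountableTopology X] [T2Space X]
    [mX : MeasurableSpace X] [OpensMeasurableSpace X] [TopologicalSpace Y] [MeasurableSpace Y]
    [BorelSpace Y] [Nonempty Y] {A : Set (X × Y)} (hA : AnalyticSet A) :
    ∃ s : X → Y, Measurable[univCompletion mX] s ∧ ∀ x ∈ Prod.fst '' A, (x, s x) ∈ A := by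
  rw [AnalyticSet] at hA
  rcases hA with rfl | ⟨h, hh, rfl⟩
  · exact ⟨fun _ => Classical.arbitrary Y, measurable_const, by simp⟩
  have hfst : Continuous (Prod.fst ∘ h) := continuous_fst.comp hh
  have hE : ∀ u, MeasurableSet[univCompletion mX] (imageCylinder (Prod.fst ∘ h) u) := fun u =>
    (isOpen_setOf_res_eq u).analyticSet_image hfst |>.measurableSet_univCompletion
  refine ⟨fun x => (h (leftmostBranch (Prod.fst ∘ h) x)).2,
    (continuous_snd.comp hh).measurable.comp (measurable_leftmostBranch hE), ?_⟩
  intro x hx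
  rw [← range_comp] at hx
  exact ⟨leftmostBranch _ x, Prod.ext (apply_leftmostBranch _ hfst hx) rfl⟩

theorem MeasurableSpace.exists_countable_measurableSet_generateFrom_prod {α β : Type*}
    {mα : MeasurableSpace α} {mβ : MeasurableSpace β} {s : Set (α × β)}
    (hs : MeasurableSet s) : ∃ C : Set (Set α), C.Countable ∧ (∀ c ∈ C, MeasurableSet c) ∧
      MeasurableSet[(generateFrom C).prod mβ] s := by
  have prod_mono : ∀ {C D : Set (Set α)}, C ⊆ D →
      ∀ t, MeasurableSet[(generateFrom C).prod mβ] t → MeasurableSet[(generateFrom D).prod mβ] t :=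
    fun hCD => sup_le_sup_right (comap_mono (generateFrom_mono hCD)) _
  induction hs with
  | basic t ht =>
    rcases ht with ⟨B, hB, rfl⟩ | ⟨B, hB, rfl⟩
    · exact ⟨{B}, countable_singleton B, by simpa using hB,
        @measurable_fst _ _ (generateFrom {B}) mβ _ (measurableSet_generateFrom rfl)⟩
    · exact ⟨∅, countable_empty, by simp, @measurable_snd _ _ (generateFrom ∅) mβ _ hB⟩
  | empty => exact ⟨∅, countable_empty, by simp, MeasurableSpace.measurableSet_empty _⟩
  | compl t _ ih =>
    obtain ⟨C, hC, hCm, ht⟩ := ih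
    exact ⟨C, hC, hCm, ht.compl⟩
  | iUnion f _ ih =>
    choose C hC hCm hf using ih
    exact ⟨⋃ n, C n, countable_iUnion hC, fun c hc => (mem_iUnion.1 hc).elim (hCm · c),
      .iUnion fun n => prod_mono (subset_iUnion C n) _ (hf n)⟩

theorem MeasurableSet.exists_natBool_prodMap_preimage {α β : Type*} {mα : MeasurableSpace α}
    {mβ : MeasurableSpace β} {s : Set (α × β)} (hs : MeasurableSet s) :
    ∃ φ : α → ℕ → Bool, Measurable φ ∧
      ∃ s' : Set ((ℕ → Bool) × β), MeasurableSet s' ∧ Prod.map φ id ⁻¹' s' = s := by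
  obtain ⟨C, hC, hCm, hsC⟩ := MeasurableSpace.exists_countable_measurableSet_generateFrom_prod hs
  obtain ⟨t, ht⟩ := (hC.insert ∅).exists_eq_range (insert_nonempty _ _)
  have htm : ∀ n, MeasurableSet (t n) := fun n => by
    rcases (ht ▸ mem_range_self n : t n ∈ insert ∅ C) with h | h
    · exact h ▸ .empty
    · exact hCm _ h
  classical
  let φ : α → ℕ → Bool := fun a n => decide (a ∈ t n)
  have hφ : Measurable φ :=
    measurable_pi_lambda _ fun n => measurable_to_bool (by convert htm n; ext; simp [φ])
  have hgen_le : MeasurableSpace.generateFrom C ≤ MeasurableSpace.comap φ inferInstance := by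
    refine MeasurableSpace.generateFrom_le fun c hc => ?_
    obtain ⟨n, rfl⟩ : c ∈ range t := ht ▸ mem_insert_of_mem _ hc
    exact ⟨(· n) ⁻¹' {true}, measurable_pi_apply n (measurableSet_singleton true), by
      ext; simp [φ]⟩
  have : MeasurableSet[(MeasurableSpace.pi.prod mβ).comap (Prod.map φ id)] s := by
    rw [MeasurableSpace.comap_prodMap, MeasurableSpace.comap_id]
    exact sup_le_sup_right (MeasurableSpace.comap_mono hgen_le) _ _ hsC
  obtain ⟨s', hs', hss'⟩ := this
  exact ⟨φ, hφ, s', hs', hss'⟩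

theorem image_fst_preimage_prodMap {α β γ : Type*} (φ : α → γ) (s : Set (γ × β)) :
    Prod.fst '' (Prod.map φ id ⁻¹' s) = φ ⁻¹' (Prod.fst '' s) := by
  ext a
  simp

section Projection

variable {Ω Y : Type*} [mΩ : MeasurableSpace Ω] [TopologicalSpace Y] [PolishSpace Y]
  [MeasurableSpace Y] [BorelSpace Y] {A : Set (Ω × Y)}

theorem MeasurableSet.exists_analyticSet_prodMap_preimage (hA : MeasurableSet A) :
    ∃ φ : Ω → ℕ → Bool, Measurable φ ∧
      ∃ A' : Set ((ℕ → Bool) × Y), AnalyticSet A' ∧ Prod.map φ id ⁻¹' A' = A := by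
  -- without this, instance search fails to find `PolishSpace (ℕ → Bool)`
  have : TopologicalSpace.SeparableSpace (ℕ → Bool) := inferInstance
  obtain ⟨φ, hφ, A', hA', rfl⟩ := hA.exists_natBool_prodMap_preimage
  exact ⟨φ, hφ, A', hA'.analyticSet, rfl⟩

theorem MeasurableSet.measurableSet_univCompletion_image_fst (hA : MeasurableSet A) :
    MeasurableSet[univCompletion mΩ] (Prod.fst '' A) := by
  obtain ⟨φ, hφ, A', hA', rfl⟩ := hA.exists_analyticSet_prodMap_preimage
  rw [image_fst_preimage_prodMap]
  exact hφ.univCompletion (hA'.image_of_continuous continuous_fst).measurableSet_univCompletion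

theorem MeasurableSet.exists_measurable_univCompletion_section [Nonempty Y]
    (hA : MeasurableSet A) :
    ∃ s : Ω → Y, Measurable[univCompletion mΩ] s ∧ ∀ ω ∈ Prod.fst '' A, (ω, s ω) ∈ A := by
  obtain ⟨φ, hφ, A', hA', rfl⟩ := hA.exists_analyticSet_prodMap_preimage
  obtain ⟨s, hs, hsA'⟩ := hA'.exists_measurable_univCompletion_section
  refine ⟨s ∘ φ, hs.comp hφ.univCompletion, fun ω hω => hsA' (φ ω) ?_⟩
  rwa [image_fst_preimage_prodMap] at hω

theorem MeasurableSet.measurable_univCompletion_iSup_mem {α : Type*} [CompleteLinearOrder α]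
    [TopologicalSpace α] [OrderTopology α] [SecondCountableTopology α] [MeasurableSpace α]
    [BorelSpace α] (hA : MeasurableSet A) {f : Ω × Y → α} (hf : Measurable f) :
    Measurable[univCompletion mΩ] fun ω => ⨆ (t : Y) (_ : (ω, t) ∈ A), f (ω, t) := by
  refine measurable_of_Ioi fun a => ?_
  have : (fun ω => ⨆ (t : Y) (_ : (ω, t) ∈ A), f (ω, t)) ⁻¹' Ioi a =
      Prod.fst '' (A ∩ f ⁻¹' Ioi a) := by
    ext ω
    simp [lt_iSup_iff]
  rw [this]
  exact (hA.inter (hf measurableSet_Ioi)).measurableSet_univCompletion_image_fst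

end Projection

/-- **Universally measurable projection and section on `ℝ⁺`.** For any measurable space
`(Ω, F)` and `A` in the product σ-field of `Ω × ℝ⁺`: (i) `π_Ω(A)` is universally
measurable; (ii) there is an `F^U`-measurable section `T` of `A`; (iii) for every
product-measurable `f : Ω × ℝ⁺ → ℝ`, the partial supremum `g` (with `sup ∅ = −∞`) is
`F^U`-measurable. -/
theorem universal_projection_section
    {Ω : Type*} [mΩ : MeasurableSpace Ω]
    (A : Set (Ω × ℝ≥0)) (hA : MeasurableSet A) :
    MeasurableSet[univCompletion mΩ] (Prod.fst '' A) ∧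
    (∃ T : Ω → ℝ≥0∞, Measurable[univCompletion mΩ] T ∧
      {ω | T ω < ⊤} = Prod.fst '' A ∧
      (∀ ω, T ω < ⊤ → (ω, (T ω).toNNReal) ∈ A)) ∧
    (∀ f : Ω × ℝ≥0 → ℝ, Measurable f →
      Measurable[univCompletion mΩ]
        (fun ω => ⨆ (t : ℝ≥0) (_ : (ω, t) ∈ A), (f (ω, t) : EReal))) := by
  classical
  have hproj := hA.measurableSet_univCompletion_image_fst
  obtain ⟨s, hs, hsA⟩ := hA.exists_measurable_univCompletion_section
  have hs' : Measurable[univCompletion mΩ] fun ω => (s ω : ℝ≥0∞) :=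
    measurable_coe_nnreal_ennreal.comp hs
  refine ⟨hproj, ⟨(Prod.fst '' A).piecewise (fun ω => (s ω : ℝ≥0∞)) fun _ => ⊤,
    hs'.piecewise hproj measurable_const, ?_, ?_⟩,
    fun f hf => hA.measurable_univCompletion_iSup_mem (f := fun p => (f p : EReal))
      (measurable_coe_real_ereal.comp hf)⟩
  · ext ω
    by_cases hω : ω ∈ Prod.fst '' A <;> simp [hω]
  · intro ω hω
    by_cases h : ω ∈ Prod.fst '' A
    · simpa [h] using hsA ω h
    · simp [h] at hω
end

section
/- (General measurable selection theorem.) Let (Ω, F) be a measurable space, E a Borel space with Borel σ-field B(E), and A ∈ F ⊗ B(E). Let ∂ be a point not in E. Then there exists a map Z : Ω → E ∪ {∂}, measurable from (Ω, F^U) to E ∪ {∂} (with σ-field generated by the Borel sets of E together with {∂}), such that (ω, Z(ω)) ∈ A for every ω with Z(ω) ∈ E, and { ω : Z(ω) ∈ E } = π_Ω(A). -/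
/-!
Embed `E` into Baire space `ℕ → ℕ`. Every set of `F ⊗ B(ℕ → ℕ)` is obtained by the Souslin
operation from rectangles `F × D` with `F ∈ F` and `D` closed; recording, along a branch, both the
node of this scheme and an initial segment of the point to be selected turns `π_Ω(A)` into the
Souslin set of a scheme of sets of `F`. Such a set is `μ`-measurable for every finite `μ`: the
measurable hull of the part of the Souslin set below a node is, up to a null set, covered by the
hulls of its children, so off a null set every point of the hull at the root can be followed down
a branch. Hence `π_Ω(A)` is universally measurable, and choosing at each node the least child whose
part of the Souslin set still contains `ω` gives a universally measurable branch; since the `D` are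
closed, its recorded segments converge to a point of the section of `A` at `ω`.
-/

open MeasureTheory

/-- The σ-field on `E ∪ {∂}` (modelled as `Option E`, with `∂ = none`) generated by the
Borel sets of `E` together with `{∂}`. -/
def optionSigma (E : Type*) [MeasurableSpace E] : MeasurableSpace (Option E) :=
  MeasurableSpace.generateFrom
    ({t | ∃ s : Set E, MeasurableSet s ∧ t = Option.some '' s} ∪ {{(none : Option E)}})

open Set Filter

namespace SouslinScheme

variable {Ω : Type*}

def seg (σ : ℕ → ℕ) (n : ℕ) : List ℕ := (List.range n).map σ

@[simp] lemma seg_zero (σ : ℕ → ℕ) : seg σ 0 = [] := rfl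

@[simp] lemma length_seg (σ : ℕ → ℕ) (n : ℕ) : (seg σ n).length = n := by simp [seg]

lemma seg_succ (σ : ℕ → ℕ) (n : ℕ) : seg σ (n + 1) = seg σ n ++ [σ n] := by
  simp [seg, List.range_succ]

lemma seg_succ_eq_cons (σ : ℕ → ℕ) (n : ℕ) :
    seg σ (n + 1) = σ 0 :: seg (fun i => σ (i + 1)) n := by
  simp only [seg, List.range_succ_eq_map, List.map_cons, List.map_map]
  rfl

lemma take_seg (σ : ℕ → ℕ) (m n : ℕ) : (seg σ n).take m = seg σ (min m n) := by
  simp [seg, ← List.map_take, List.take_range]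

lemma map_seg (f σ : ℕ → ℕ) (n : ℕ) : (seg σ n).map f = seg (f ∘ σ) n := by
  simp [seg, List.map_map]

lemma seg_eq_seg_iff {σ τ : ℕ → ℕ} {n : ℕ} : seg σ n = seg τ n ↔ ∀ i < n, σ i = τ i := by
  simp [seg, List.map_inj_left]

lemma getD_seg (σ : ℕ → ℕ) {i n : ℕ} (h : i < n) : (seg σ n).getD i 0 = σ i := by
  simp [seg, h]

def souslin (P : List ℕ → Set Ω) : Set Ω := ⋃ σ : ℕ → ℕ, ⋂ n, P (seg σ n)

lemma mem_souslin {P : List ℕ → Set Ω} {ω : Ω} :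
    ω ∈ souslin P ↔ ∃ σ : ℕ → ℕ, ∀ n, ω ∈ P (seg σ n) := by
  simp [souslin]

def souslinFrom (P : List ℕ → Set Ω) (s : List ℕ) : Set Ω := souslin fun u => P (s ++ u)

lemma souslinFrom_nil (P : List ℕ → Set Ω) : souslinFrom P [] = souslin P := rfl

lemma souslinFrom_subset (P : List ℕ → Set Ω) (s : List ℕ) : souslinFrom P s ⊆ P s := by
  intro ω hω
  obtain ⟨σ, hσ⟩ := mem_souslin.1 hω
  simpa using hσ 0

lemma souslinFrom_subset_iUnion (P : List ℕ → Set Ω) (s : List ℕ) :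
    souslinFrom P s ⊆ ⋃ k, souslinFrom P (s ++ [k]) := by
  intro ω hω
  obtain ⟨σ, hσ⟩ := mem_souslin.1 hω
  refine mem_iUnion.2 ⟨σ 0, mem_souslin.2 ⟨fun i => σ (i + 1), fun n => ?_⟩⟩
  simpa [seg_succ_eq_cons] using hσ (n + 1)

lemma exists_mem_append_or_notMem_iUnion (X : List ℕ → Set Ω) (ω : Ω) (s : List ℕ) :
    ∃ k, ω ∈ X (s ++ [k]) ∪ (⋃ j, X (s ++ [j]))ᶜ :=
  (em (ω ∈ ⋃ j, X (s ++ [j]))).elim (fun h => (mem_iUnion.1 h).imp fun _ => Or.inl)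
    fun h => ⟨0, Or.inr h⟩

open scoped Classical in
/-- The least `k` with `ω ∈ X (s ++ [k])`, and `0` if there is none. -/
noncomputable def firstIndex (X : List ℕ → Set Ω) (ω : Ω) (s : List ℕ) : ℕ :=
  Nat.find (exists_mem_append_or_notMem_iUnion X ω s)

lemma mem_firstIndex {X : List ℕ → Set Ω} {ω : Ω} {s : List ℕ} {k : ℕ}
    (hk : ω ∈ X (s ++ [k])) : ω ∈ X (s ++ [firstIndex X ω s]) := by
  classical
  exact (Nat.find_spec (exists_mem_append_or_notMem_iUnion X ω s)).resolve_right
    (not_not.2 (mem_iUnion.2 ⟨k, hk⟩))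

noncomputable def leastPath (X : List ℕ → Set Ω) (ω : Ω) : ℕ → List ℕ
  | 0 => []
  | n + 1 => leastPath X ω n ++ [firstIndex X ω (leastPath X ω n)]

noncomputable def leastBranch (X : List ℕ → Set Ω) (ω : Ω) (n : ℕ) : ℕ :=
  firstIndex X ω (leastPath X ω n)

lemma seg_leastBranch (X : List ℕ → Set Ω) (ω : Ω) (n : ℕ) :
    seg (leastBranch X ω) n = leastPath X ω n := by
  induction n with
  | zero => rfl
  | succ n ih => rw [seg_succ, ih]; rfl

lemma mem_seg_leastBranch {X : List ℕ → Set Ω} {ω : Ω} (hroot : ω ∈ X [])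
    (hstep : ∀ s, ω ∈ X s → ∃ k, ω ∈ X (s ++ [k])) (n : ℕ) :
    ω ∈ X (seg (leastBranch X ω) n) := by
  rw [seg_leastBranch]
  induction n with
  | zero => exact hroot
  | succ n ih =>
    obtain ⟨k, hk⟩ := hstep _ ih
    exact mem_firstIndex hk

section Measurability

variable {m : MeasurableSpace Ω} {X : List ℕ → Set Ω}

open scoped Classical in
lemma measurable_firstIndex (hX : ∀ s, MeasurableSet[m] (X s)) (s : List ℕ) :
    Measurable[m] fun ω => firstIndex X ω s :=
  measurable_find _ fun _ => (hX _).union (MeasurableSet.iUnion fun _ => hX _).compl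

lemma measurableSet_leastPath_eq (hX : ∀ s, MeasurableSet[m] (X s)) (n : ℕ) (t : List ℕ) :
    MeasurableSet[m] {ω | leastPath X ω n = t} := by
  induction n generalizing t with
  | zero => exact MeasurableSet.const ([] = t)
  | succ n ih =>
    have : {ω | leastPath X ω (n + 1) = t} = ⋃ s, {ω | leastPath X ω n = s} ∩
        (fun ω => firstIndex X ω s) ⁻¹' {k | s ++ [k] = t} := by
      ext ω
      simp [leastPath]
    rw [this]
    exact .iUnion fun s => (ih s).inter (measurable_firstIndex hX s .of_discrete)

lemma measurable_leastBranch (hX : ∀ s, MeasurableSet[m] (X s)) :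
    Measurable[m] (leastBranch X) := by
  refine measurable_pi_iff.2 fun n => measurable_to_countable' fun k => ?_
  have : (fun ω => leastBranch X ω n) ⁻¹' {k} =
      ⋃ s, {ω | leastPath X ω n = s} ∩ (fun ω => firstIndex X ω s) ⁻¹' {k} := by
    ext ω
    simp [leastBranch]
  rw [this]
  exact .iUnion fun s => (measurableSet_leastPath_eq hX n s).inter
    (measurable_firstIndex hX s .of_discrete)

end Measurability

section LusinSierpinski

variable [MeasurableSpace Ω]

lemma measure_toMeasurable_diff_eq_zero {μ : Measure Ω} [SFinite μ] {s M : Set Ω}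
    (hM : MeasurableSet M) (hsM : s ⊆ M) : μ (toMeasurable μ s \ M) = 0 := by
  rw [sdiff_eq, Measure.measure_toMeasurable_inter_of_sFinite hM.compl, ← sdiff_eq,
    sdiff_eq_empty.2 hsM, measure_empty]

theorem nullMeasurableSet_souslin {P : List ℕ → Set Ω} (hP : ∀ s, MeasurableSet (P s))
    (μ : Measure Ω) [SFinite μ] : NullMeasurableSet (souslin P) μ := by
  set H : List ℕ → Set Ω := fun s => toMeasurable μ (souslinFrom P s) ∩ P s
  have hH : ∀ s, MeasurableSet (H s) := fun s => (measurableSet_toMeasurable _ _).inter (hP s)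
  have hsub : ∀ s, souslinFrom P s ⊆ H s := fun s =>
    subset_inter (subset_toMeasurable _ _) (souslinFrom_subset P s)
  set N := ⋃ s, H s \ ⋃ k, H (s ++ [k])
  have hN : μ N = 0 := measure_iUnion_null fun s =>
    measure_mono_null (sdiff_subset_sdiff_left inter_subset_left)
      (measure_toMeasurable_diff_eq_zero (.iUnion fun k => hH _)
        ((souslinFrom_subset_iUnion P s).trans (iUnion_mono fun k => hsub _)))
  have hHN : H [] \ N ⊆ souslin P := by
    rintro ω ⟨hroot, hωN⟩
    have hstep : ∀ s, ω ∈ H s → ∃ k, ω ∈ H (s ++ [k]) := fun s hs => by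
      by_contra! h
      exact hωN (mem_iUnion.2 ⟨s, hs, by simpa using h⟩)
    exact mem_souslin.2 ⟨_, fun n => (mem_seg_leastBranch hroot hstep n).2⟩
  refine (hH []).nullMeasurableSet.congr (ae_eq_set.2 ⟨measure_mono_null ?_ hN, ?_⟩)
  · intro ω hω
    by_contra hωN
    exact hω.2 (hHN ⟨hω.1, hωN⟩)
  · rw [← souslinFrom_nil, sdiff_eq_empty.2 (hsub []), measure_empty]

end LusinSierpinski

lemma measurableSet_univCompletion_souslin {m : MeasurableSpace Ω} {P : List ℕ → Set Ω}
    (hP : ∀ s, MeasurableSet[m] (P s)) : MeasurableSet[univCompletion m] (souslin P) :=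
  fun μ hμ => haveI := hμ; nullMeasurableSet_souslin hP μ

/-- At a node of length `n + 1`, where `n = pair m k`, the branch is tested against the `k`-th
node of the `m`-th scheme, whose branch is read off the coordinates `pair m j`. -/
def interScheme (P : ℕ → List ℕ → Set Ω) (s : List ℕ) : Set Ω :=
  match s.length with
  | 0 => univ
  | n + 1 => P n.unpair.1 (seg (fun j => s.getD (Nat.pair n.unpair.1 j) 0) n.unpair.2)

lemma interScheme_seg_succ (P : ℕ → List ℕ → Set Ω) (σ : ℕ → ℕ) (n : ℕ) :
    interScheme P (seg σ (n + 1)) =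
      P n.unpair.1 (seg (fun j => σ (Nat.pair n.unpair.1 j)) n.unpair.2) := by
  simp only [interScheme, length_seg]
  congr 1
  refine seg_eq_seg_iff.2 fun j hj => getD_seg σ ?_
  have := Nat.pair_lt_pair_right n.unpair.1 hj
  rw [Nat.pair_unpair] at this
  omega

lemma souslin_interScheme (P : ℕ → List ℕ → Set Ω) :
    souslin (interScheme P) = ⋂ m, souslin (P m) := by
  ext ω
  simp only [mem_iInter, mem_souslin]
  constructor
  · rintro ⟨σ, hσ⟩ m
    exact ⟨fun j => σ (Nat.pair m j), fun k => by
      simpa [interScheme_seg_succ] using hσ (Nat.pair m k + 1)⟩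
  · intro h
    choose τ hτ using h
    refine ⟨fun i => τ i.unpair.1 i.unpair.2, fun n => ?_⟩
    cases n with
    | zero => trivial
    | succ n => simpa [interScheme_seg_succ] using hτ n.unpair.1 n.unpair.2

def IsSouslin (C : Set (Set Ω)) (A : Set Ω) : Prop :=
  ∃ P : List ℕ → Set Ω, (∀ s, P s ∈ C) ∧ souslin P = A

namespace IsSouslin

variable {C : Set (Set Ω)}

lemma of_mem {A : Set Ω} (hA : A ∈ C) : IsSouslin C A :=
  ⟨fun _ => A, fun _ => hA, by rw [souslin, iInter_const, iUnion_const]⟩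

lemma iUnion (huniv : univ ∈ C) {A : ℕ → Set Ω} (hA : ∀ m, IsSouslin C (A m)) :
    IsSouslin C (⋃ m, A m) := by
  choose P hPC hPA using hA
  refine ⟨fun | [] => univ | m :: s => P m s, fun s => by cases s <;> simp [huniv, hPC], ?_⟩
  ext ω
  simp only [mem_iUnion, ← hPA, mem_souslin]
  constructor
  · rintro ⟨σ, hσ⟩
    exact ⟨σ 0, fun i => σ (i + 1), fun n => by simpa [seg_succ_eq_cons] using hσ (n + 1)⟩
  · rintro ⟨m, σ, hσ⟩
    refine ⟨fun i => Nat.casesOn i m σ, fun n => ?_⟩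
    cases n with
    | zero => trivial
    | succ n => simpa [seg_succ_eq_cons] using hσ n

lemma union {A B : Set Ω} (huniv : univ ∈ C) (hA : IsSouslin C A) (hB : IsSouslin C B) :
    IsSouslin C (A ∪ B) := by
  have : A ∪ B = ⋃ m : ℕ, if m = 0 then A else B := by
    ext ω
    simp only [mem_union, mem_iUnion]
    refine ⟨fun h => h.elim (fun h => ⟨0, by simpa⟩) fun h => ⟨1, by simpa⟩, fun ⟨m, hm⟩ => ?_⟩
    split_ifs at hm
    exacts [.inl hm, .inr hm]
  rw [this]
  exact .iUnion huniv fun m => by split_ifs <;> assumption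

lemma iInter (huniv : univ ∈ C) {A : ℕ → Set Ω} (hA : ∀ m, IsSouslin C (A m)) :
    IsSouslin C (⋂ m, A m) := by
  choose P hPC hPA using hA
  refine ⟨interScheme P, fun s => ?_, by simp [souslin_interScheme, hPA]⟩
  unfold interScheme
  split <;> simp [huniv, hPC]

lemma of_measurableSet_generateFrom (huniv : univ ∈ C) (hcompl : ∀ s ∈ C, IsSouslin C sᶜ)
    {A : Set Ω} (hA : MeasurableSet[.generateFrom C] A) : IsSouslin C A := by
  suffices IsSouslin C A ∧ IsSouslin C Aᶜ from this.1
  induction A, hA using MeasurableSpace.generateFrom_induction with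
  | hC s hs => exact ⟨.of_mem hs, hcompl s hs⟩
  | empty => exact ⟨by simpa using hcompl univ huniv, by simpa using of_mem huniv⟩
  | compl s _ ih => exact ⟨ih.2, by simpa using ih.1⟩
  | iUnion f _ ih =>
    exact ⟨.iUnion huniv fun n => (ih n).1, by simpa using iInter huniv fun n => (ih n).2⟩

end IsSouslin

def regularize (P : List ℕ → Set Ω) (s : List ℕ) : Set Ω := ⋂ n, P (s.take n)

def IsRegular (P : List ℕ → Set Ω) : Prop := ∀ s n, P s ⊆ P (s.take n)

lemma isRegular_regularize (P : List ℕ → Set Ω) : IsRegular (regularize P) :=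
  fun s n _ hω => mem_iInter.2 fun k => by
    simpa [List.take_take] using mem_iInter.1 hω (min k n)

lemma souslin_regularize (P : List ℕ → Set Ω) : souslin (regularize P) = souslin P := by
  refine Subset.antisymm (iUnion_mono fun σ => iInter_mono fun n ω hω => ?_)
    (iUnion_mono fun σ ω hω => mem_iInter.2 fun n => mem_iInter.2 fun k => ?_)
  · simpa [take_seg] using mem_iInter.1 hω (seg σ n).length
  · rw [take_seg]
    exact mem_iInter.1 hω _

lemma regularize_prod {α : Type*} (F : List ℕ → Set Ω) (D : List ℕ → Set α) :
    regularize (fun s => F s ×ˢ D s) = fun s => regularize F s ×ˢ regularize D s := by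
  ext s ⟨ω, x⟩
  simp [regularize, forall_and]

section Rectangles

variable (Ω) [MeasurableSpace Ω]

def measurableClosedRectangles : Set (Set (Ω × (ℕ → ℕ))) :=
  image2 (· ×ˢ ·) {F | MeasurableSet F} {D | IsClosed D}

variable {Ω}

lemma univ_mem_measurableClosedRectangles : univ ∈ measurableClosedRectangles Ω :=
  ⟨univ, .univ, univ, isClosed_univ, univ_prod_univ⟩

lemma isSouslin_compl_of_mem_measurableClosedRectangles {S : Set (Ω × (ℕ → ℕ))}
    (hS : S ∈ measurableClosedRectangles Ω) : IsSouslin (measurableClosedRectangles Ω) Sᶜ := by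
  obtain ⟨F, hF, D, hD, rfl⟩ := hS
  let := TopologicalSpace.pseudoMetrizableSpacePseudoMetric (ℕ → ℕ)
  obtain ⟨K, hK, -, hKD, -⟩ := hD.isOpen_compl.exists_iUnion_isClosed
  rw [compl_prod_eq_union, ← hKD, prod_iUnion]
  have hFc : Fᶜ ×ˢ univ ∈ measurableClosedRectangles Ω := ⟨Fᶜ, hF.compl, univ, isClosed_univ, rfl⟩
  exact (IsSouslin.of_mem hFc).union univ_mem_measurableClosedRectangles
    (.iUnion univ_mem_measurableClosedRectangles fun n => .of_mem ⟨univ, .univ, K n, hK n, rfl⟩)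

lemma prod_eq_generateFrom_measurableClosedRectangles :
    (Prod.instMeasurableSpace : MeasurableSpace (Ω × (ℕ → ℕ))) =
      .generateFrom (measurableClosedRectangles Ω) := by
  have hclosed : IsCountablySpanning {D : Set (ℕ → ℕ) | IsClosed D} :=
    ⟨fun _ => univ, fun _ => isClosed_univ, iUnion_const _⟩
  rw [measurableClosedRectangles,
    ← generateFrom_prod_eq isCountablySpanning_measurableSet hclosed,
    MeasurableSpace.generateFrom_measurableSet, ← borel_eq_generateFrom_isClosed,
    ← BorelSpace.measurable_eq]

theorem exists_souslin_prod_eq {A : Set (Ω × (ℕ → ℕ))} (hA : MeasurableSet A) :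
    ∃ (F : List ℕ → Set Ω) (D : List ℕ → Set (ℕ → ℕ)), (∀ s, MeasurableSet (F s)) ∧
      (∀ s, IsClosed (D s)) ∧ IsRegular D ∧ souslin (fun s => F s ×ˢ D s) = A := by
  rw [prod_eq_generateFrom_measurableClosedRectangles] at hA
  obtain ⟨P, hPC, rfl⟩ := IsSouslin.of_measurableSet_generateFrom
    univ_mem_measurableClosedRectangles
    (fun _ => isSouslin_compl_of_mem_measurableClosedRectangles) hA
  choose F hF D hD hFD using hPC
  refine ⟨regularize F, regularize D, fun s => .iInter fun n => hF _,
    fun s => isClosed_iInter fun n => hD _, isRegular_regularize D, ?_⟩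
  rw [← regularize_prod, ← souslin_regularize P]
  simp only [hFD]

end Rectangles

lemma mem_of_forall_exists_seg_eq {C : Set (ℕ → ℕ)} (hC : IsClosed C) {υ : ℕ → ℕ}
    (h : ∀ n, ∃ y ∈ C, seg y n = seg υ n) : υ ∈ C := by
  choose y hyC hy using h
  refine hC.mem_of_tendsto (tendsto_pi_nhds.2 fun i => ?_)
    (Eventually.of_forall (f := atTop) hyC)
  exact tendsto_atTop_of_eventually_const (i₀ := i + 1) fun n hn =>
    seg_eq_seg_iff.1 (hy n) i (by omega)

open scoped Classical in
/-- A node `t` codes, through `Nat.unpair`, a node `t.map (·.unpair.1)` of the rectangle scheme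
together with an initial segment `t.map (·.unpair.2)` of the point to be selected; it keeps the
`F`-part only if that segment extends to a point of the closed part. -/
noncomputable def projScheme (F : List ℕ → Set Ω) (D : List ℕ → Set (ℕ → ℕ)) (t : List ℕ) :
    Set Ω :=
  if ∃ y ∈ D (t.map (·.unpair.1)), seg y t.length = t.map (·.unpair.2)
  then F (t.map (·.unpair.1)) else ∅

variable {F : List ℕ → Set Ω} {D : List ℕ → Set (ℕ → ℕ)}

lemma measurableSet_projScheme [MeasurableSpace Ω] (hF : ∀ s, MeasurableSet (F s))
    (t : List ℕ) : MeasurableSet (projScheme F D t) := by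
  unfold projScheme
  split_ifs
  exacts [hF _, .empty]

lemma mem_projScheme_seg {ω : Ω} {σ : ℕ → ℕ} {n : ℕ} :
    ω ∈ projScheme F D (seg σ n) ↔ ω ∈ F (seg (fun i => (σ i).unpair.1) n) ∧
      ∃ y ∈ D (seg (fun i => (σ i).unpair.1) n), seg y n = seg (fun i => (σ i).unpair.2) n := by
  unfold projScheme
  split_ifs with h <;> simp only [map_seg, length_seg, Function.comp_def] at h ⊢ <;> simp [h]

lemma mem_souslin_of_forall_mem_projScheme (hD : ∀ s, IsClosed (D s)) (hreg : IsRegular D)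
    {ω : Ω} {σ : ℕ → ℕ} (h : ∀ n, ω ∈ projScheme F D (seg σ n)) :
    (ω, fun i => (σ i).unpair.2) ∈ souslin fun s => F s ×ˢ D s := by
  simp only [mem_projScheme_seg] at h
  refine mem_souslin.2 ⟨fun i => (σ i).unpair.1, fun m => ⟨(h m).1, ?_⟩⟩
  refine mem_of_forall_exists_seg_eq (hD _) fun n => ?_
  obtain ⟨y, hyD, hy⟩ := (h (max n m)).2
  refine ⟨y, ?_, seg_eq_seg_iff.2 fun i hi => seg_eq_seg_iff.1 hy i (by omega)⟩
  simpa [take_seg] using hreg _ m hyD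

lemma souslin_projScheme (hD : ∀ s, IsClosed (D s)) (hreg : IsRegular D) :
    souslin (projScheme F D) = Prod.fst '' souslin fun s => F s ×ˢ D s := by
  refine Subset.antisymm (fun ω hω => ?_) ?_
  · obtain ⟨σ, hσ⟩ := mem_souslin.1 hω
    exact ⟨_, mem_souslin_of_forall_mem_projScheme hD hreg hσ, rfl⟩
  · rintro _ ⟨⟨ω, x⟩, hωx, rfl⟩
    obtain ⟨τ, hτ⟩ := mem_souslin.1 hωx
    refine mem_souslin.2 ⟨fun n => Nat.pair (τ n) (x n), fun n => ?_⟩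
    simp only [mem_projScheme_seg, Nat.unpair_pair]
    exact ⟨(hτ n).1, x, (hτ n).2, rfl⟩

end SouslinScheme

open SouslinScheme

theorem exists_univCompletion_measurable_selection_nat_nat {Ω : Type*}
    [mΩ : MeasurableSpace Ω] {A : Set (Ω × (ℕ → ℕ))} (hA : MeasurableSet A) :
    MeasurableSet[univCompletion mΩ] (Prod.fst '' A) ∧ ∃ Y : Ω → ℕ → ℕ,
      Measurable[univCompletion mΩ] Y ∧ ∀ ω ∈ Prod.fst '' A, (ω, Y ω) ∈ A := by
  obtain ⟨F, D, hF, hD, hreg, rfl⟩ := exists_souslin_prod_eq hA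
  set G := projScheme F D
  have hG : ∀ t, MeasurableSet (G t) := measurableSet_projScheme hF
  rw [← souslin_projScheme hD hreg]
  have hGfrom : ∀ s, MeasurableSet[univCompletion mΩ] (souslinFrom G s) := fun _ =>
    measurableSet_univCompletion_souslin fun _ => hG _
  have hunpair : Measurable fun (σ : ℕ → ℕ) n => (σ n).unpair.2 :=
    measurable_pi_lambda _ fun n =>
      (measurable_from_nat (f := fun c => c.unpair.2)).comp (measurable_pi_apply n)
  refine ⟨measurableSet_univCompletion_souslin hG,
    fun ω n => (leastBranch (souslinFrom G) ω n).unpair.2,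
    hunpair.comp (measurable_leastBranch hGfrom),
    fun ω hω => mem_souslin_of_forall_mem_projScheme hD hreg fun n => ?_⟩
  refine souslinFrom_subset G _ (mem_seg_leastBranch hω (fun s hs => ?_) n)
  exact mem_iUnion.1 (souslinFrom_subset_iUnion G s hs)

lemma not_countable_nat_nat : ¬ Countable (ℕ → ℕ) := by
  intro h
  obtain ⟨f, hf⟩ := exists_surjective_nat (ℕ → ℕ)
  obtain ⟨k, hk⟩ := hf fun n => f n n + 1
  have := congrFun hk k
  omega

lemma exists_measurableEmbedding_nat_nat (E : Type*) [MeasurableSpace E]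
    [StandardBorelSpace E] : ∃ g : E → ℕ → ℕ, MeasurableEmbedding g := by
  obtain ⟨f, hf⟩ := exists_measurableEmbedding_real E
  exact ⟨_, (PolishSpace.measurableEquivOfNotCountable not_countable
    not_countable_nat_nat).measurableEmbedding.comp hf⟩

theorem exists_univCompletion_measurable_selection {Ω E : Type*} [mΩ : MeasurableSpace Ω]
    [MeasurableSpace E] [StandardBorelSpace E] [Nonempty E] {A : Set (Ω × E)}
    (hA : MeasurableSet A) :
    MeasurableSet[univCompletion mΩ] (Prod.fst '' A) ∧ ∃ Y : Ω → E,
      Measurable[univCompletion mΩ] Y ∧ ∀ ω ∈ Prod.fst '' A, (ω, Y ω) ∈ A := by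
  obtain ⟨g, hg⟩ := exists_measurableEmbedding_nat_nat E
  obtain ⟨h, hh, hhg⟩ := hg.exists_measurable_extend measurable_id fun _ => inferInstance
  have hfst : Prod.fst '' (Prod.map id g '' A) = Prod.fst '' A := by
    rw [image_image]
    rfl
  obtain ⟨hS, Y, hY, hYA⟩ := exists_univCompletion_measurable_selection_nat_nat
    ((MeasurableEmbedding.id.prodMap hg).measurableSet_image' hA)
  refine ⟨hfst ▸ hS, h ∘ Y, hh.comp hY, fun ω hω => ?_⟩
  obtain ⟨⟨_, e⟩, he, hωe⟩ := hYA ω (hfst ▸ hω)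
  obtain ⟨rfl, hge⟩ := Prod.mk.inj hωe
  rwa [Function.comp_apply, ← hge, ← Function.comp_apply (f := h), hhg]

open scoped Classical in
lemma measurable_optionSigma_ite {Ω E : Type*} {m : MeasurableSpace Ω} [MeasurableSpace E]
    {S : Set Ω} {Y : Ω → E} (hS : MeasurableSet[m] S) (hY : Measurable[m] Y) :
    Measurable[m, optionSigma E] fun ω => if ω ∈ S then some (Y ω) else none := by
  refine measurable_generateFrom ?_
  rintro _ (⟨B, hB, rfl⟩ | rfl)
  · convert hS.inter (hY hB) using 1
    ext ω
    by_cases hω : ω ∈ S <;> simp [hω]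
  · convert hS.compl using 1
    ext ω
    by_cases hω : ω ∈ S <;> simp [hω]

/-- **General measurable selection theorem.**  For a measurable space `(Ω, F)`, a Borel
space `E` (modelled as a standard Borel space) and `A` in the product σ-field, there is a
universally measurable map `Z : Ω → E ∪ {∂}` whose graph is contained in `A` on
`{Z ∈ E}`, and `{Z ∈ E} = π_Ω(A)`. -/
theorem general_measurable_selection
    {Ω E : Type*} [mΩ : MeasurableSpace Ω]
    [MeasurableSpace E] [StandardBorelSpace E]
    (A : Set (Ω × E)) (hA : MeasurableSet A) :
    ∃ Z : Ω → Option E,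
      @Measurable Ω (Option E) (univCompletion mΩ) (optionSigma E) Z ∧
      (∀ ω : Ω, ∀ x : E, Z ω = some x → (ω, x) ∈ A) ∧
      {ω | Z ω ≠ none} = Prod.fst '' A := by
  classical
  rcases isEmpty_or_nonempty E with _ | _
  · refine ⟨fun _ => none, measurable_const, fun _ x => isEmptyElim x, ?_⟩
    simp [eq_empty_of_isEmpty A]
  obtain ⟨hS, Y, hY, hYA⟩ := exists_univCompletion_measurable_selection hA
  refine ⟨fun ω => if ω ∈ Prod.fst '' A then some (Y ω) else none,
    measurable_optionSigma_ite hS hY, fun ω x hx => ?_, ?_⟩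
  · obtain ⟨hω, ⟨⟩⟩ := Option.ite_none_right_eq_some.1 hx
    exact hYA ω hω
  · ext ω
    simp [ite_eq_right_iff]
end
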